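/- arXiv:2305.01919 — 5 statements merged into one kernel-verified Lean document; each statement's English description precedes it below -/
import Mathlib

section
/- Let G be a bipartite graph all of whose components are trees or unicyclic. Let H ⊆ Q(n,2) be a q-graph containing no (q+1)-copy of G. Then for any (a,b) ∈ [q]², the simple graph H_{(a,b),(ā,b̄)} contains no complete bipartite graph K_{R,R}, where R = R(|V(G)|, |V(G)|) is the bipartite Ramsey number and ā = q+1−a, b̄ = q+1−b. -/
open Finset

/-- The support of a vector: indices of nonzero entries. -/
def qsupport {n : ℕ} (x : Fin n → ℕ) : Finset (Fin n) :=
  Finset.univ.filter (fun i => x i ≠ 0)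

/-- `Qset q n` : all q-edges, i.e. vectors in `{0,…,q}^n` with exactly two nonzero entries. -/
def Qset (q n : ℕ) : Finset (Fin n → ℕ) :=
  ((Finset.univ : Finset (Fin n → Fin (q+1))).image (fun f i => (f i : ℕ))).filter
    (fun x => (qsupport x).card = 2)

/-- The q-edge with support `{i,j}`, value `a` at `i` and `b` at `j`. -/
def qedge {n : ℕ} (i j : Fin n) (a b : ℕ) : Fin n → ℕ :=
  fun k => if k = i then a else if k = j then b else 0

/-- `H` is an `s`-copy of the graph `F`. -/
def IsSCopy {α : Type} [Fintype α] (s : ℕ) (F : SimpleGraph α) {n : ℕ}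
    (H : Finset (Fin n → ℕ)) : Prop :=
  ∃ ι : α → Fin n, Function.Injective ι ∧
    (∀ u v : α, F.Adj u v ↔ ∃ x ∈ H, qsupport x = {ι u, ι v}) ∧
    H.card = Nat.card F.edgeSet ∧
    ∀ x ∈ H, ∀ y ∈ H, x ≠ y → ∀ i, x i ≠ 0 → y i ≠ 0 → s ≤ x i + y i

/-- `H` contains an `s`-copy of `F`. -/
def ContainsSCopy {α : Type} [Fintype α] (s : ℕ) (F : SimpleGraph α) {n : ℕ}
    (H : Finset (Fin n → ℕ)) : Prop :=
  ∃ H' ⊆ H, IsSCopy s F H'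

/-- The ordinary Turán number `ex(n,F)`. -/
noncomputable def exNum {α : Type} [Fintype α] (n : ℕ) (F : SimpleGraph α) : ℕ :=
  sSup {m | ∃ G : SimpleGraph (Fin n),
    (¬ ∃ φ : F →g G, Function.Injective φ) ∧ m = Nat.card G.edgeSet}

/-- The Turán number `ex(n,F,q,s)`. -/
noncomputable def exQ {α : Type} [Fintype α] (n : ℕ) (F : SimpleGraph α) (q s : ℕ) : ℕ :=
  sSup {m | ∃ H ⊆ Qset q n, ¬ ContainsSCopy s F H ∧ m = H.card}

/-- The bipartite Ramsey number `R(m,m)`: least `c` such that every 2-coloring of the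
edges of `K_{c,c}` contains a monochromatic `K_{m,m}`. -/
noncomputable def bipRamsey (m : ℕ) : ℕ :=
  sInf {c | ∀ χ : Fin c → Fin c → Bool, ∃ (A B : Finset (Fin c)) (col : Bool),
    A.card = m ∧ B.card = m ∧ ∀ i ∈ A, ∀ j ∈ B, χ i j = col}


section AuxLemmas

lemma ramsey_mem (m c : ℕ) (h1 : 2*m ≤ c) (h2 : 2^(2*m)*m ≤ c) :
    c ∈ {c | ∀ χ : Fin c → Fin c → Bool, ∃ (A B : Finset (Fin c)) (col : Bool),
    A.card = m ∧ B.card = m ∧ ∀ i ∈ A, ∀ j ∈ B, χ i j = col} := by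
  intro χ
  set emb : Fin (2*m) → Fin c := fun j => ⟨j.1, lt_of_lt_of_le j.2 h1⟩ with hemb
  have embinj : Function.Injective emb := by
    intro x y h
    have h2 : (emb x).1 = (emb y).1 := congrArg Fin.val h
    exact Fin.ext h2
  set pat : Fin c → (Fin (2*m) → Bool) := fun i j => χ i (emb j) with hpat
  obtain ⟨p, -, hp⟩ :=
    Finset.exists_le_card_fiber_of_mul_le_card_of_maps_to
      (s := (univ : Finset (Fin c))) (t := (univ : Finset (Fin (2*m) → Bool)))
      (f := pat) (n := m) (fun a _ => mem_univ _) univ_nonempty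
      (by simpa [Fintype.card_fun] using h2)
  obtain ⟨A, hAsub, hAcard⟩ := Finset.exists_subset_card_eq hp
  obtain ⟨col, -, hcol⟩ :=
    Finset.exists_le_card_fiber_of_mul_le_card_of_maps_to
      (s := (univ : Finset (Fin (2*m)))) (t := (univ : Finset Bool))
      (f := p) (n := m) (fun a _ => mem_univ _) univ_nonempty (by simp [mul_comm])
  obtain ⟨B₁, hBsub, hBcard⟩ := Finset.exists_subset_card_eq hcol
  refine ⟨A, B₁.image emb, col, hAcard, by rw [card_image_of_injective _ embinj]; exact hBcard, ?_⟩
  intro i hi j hj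
  obtain ⟨j₁, hj₁, rfl⟩ := mem_image.1 hj
  have hpi : pat i = p := (mem_filter.1 (hAsub hi)).2
  have hcj : p j₁ = col := (mem_filter.1 (hBsub hj₁)).2
  calc χ i (emb j₁) = pat i j₁ := rfl
  _ = p j₁ := by rw [hpi]
  _ = col := hcj

lemma bipRamsey_spec (m : ℕ) (χ : Fin (bipRamsey m) → Fin (bipRamsey m) → Bool) :
    ∃ (A B : Finset (Fin (bipRamsey m))) (col : Bool),
      A.card = m ∧ B.card = m ∧ ∀ i ∈ A, ∀ j ∈ B, χ i j = col :=
  Nat.sInf_mem (⟨2^(2*m)*m + 2*m, ramsey_mem m _ (by omega) (by omega)⟩ : Set.Nonempty _) χ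

lemma walk_cross {α : Type} (G : SimpleGraph α) :
    ∀ {u v : α} (_ : G.Walk u v) (P : α → Prop), ¬ P u → P v →
      ∃ x y, G.Adj x y ∧ ¬ P x ∧ P y ∧ G.Reachable u x := by
  intro u v p
  induction p with
  | nil => intro P hu hv; exact absurd hv hu
  | @cons u' v' w' h q ih =>
    intro P hu hv
    by_cases h' : P v'
    · exact ⟨u', v', h, hu, h', SimpleGraph.Reachable.refl _⟩
    · obtain ⟨x, y, hxy, hx, hy, hr⟩ := ih P h' hv
      exact ⟨x, y, hxy, hx, hy, (h.reachable).trans hr⟩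

lemma edge_injection {α : Type} [Fintype α] (G : SimpleGraph α)
    (hcomp : ∀ c : G.ConnectedComponent,
      Nat.card {e : Sym2 α | e ∈ G.edgeSet ∧ ∀ v ∈ e, G.connectedComponentMk v = c}
        ≤ Nat.card c.supp) :
    ∃ f : Sym2 α → α, Set.InjOn f G.edgeSet ∧ ∀ e ∈ G.edgeSet, f e ∈ e := by
  classical
  set E := G.edgeFinset with hE
  set σ : Sym2 α → G.ConnectedComponent :=
    fun e => G.connectedComponentMk (Quot.out e).1 with hσ
  set VS : Finset (Sym2 α) → Finset α :=
    fun S => S.biUnion (fun e => univ.filter (· ∈ e)) with hVS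
  have memVS : ∀ (S : Finset (Sym2 α)) (v : α), v ∈ VS S ↔ ∃ e ∈ S, v ∈ e := by
    intro S v; simp [hVS]
  have hpick : ∀ e : Sym2 α, (Quot.out e).1 ∈ e := fun e => Sym2.out_fst_mem e
  have memσ : ∀ e ∈ G.edgeSet, ∀ v ∈ e, G.connectedComponentMk v = σ e := by
    intro e he v hv
    set x := (Quot.out e).1 with hx
    set y := (Quot.out e).2 with hy
    have hexy : e = s(x, y) := by
      rw [hx, hy]; exact (Quot.out_eq e).symm
    have hadj : G.Adj x y := by
      rw [hexy] at he; exact he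
    have hv' : v = x ∨ v = y := by
      rw [hexy] at hv; exact Sym2.mem_iff.1 hv
    rcases hv' with rfl | rfl
    · rfl
    · exact (SimpleGraph.ConnectedComponent.sound hadj.symm.reachable)
  set Ec : G.ConnectedComponent → Finset (Sym2 α) := fun c => E.filter (fun e => σ e = c)
    with hEc
  set Vc : G.ConnectedComponent → Finset α := fun c => univ.filter
    (fun v => G.connectedComponentMk v = c) with hVc
  have hcomp' : ∀ c, (Ec c).card ≤ (Vc c).card := by
    intro c
    have h1 : {e : Sym2 α | e ∈ G.edgeSet ∧ ∀ v ∈ e, G.connectedComponentMk v = c}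
        = ↑(Ec c) := by
      ext e
      simp only [hEc, Set.mem_setOf_eq, coe_filter, SimpleGraph.mem_edgeFinset, hE,
        Set.mem_setOf_eq]
      constructor
      · rintro ⟨he, hall⟩
        exact ⟨he, (memσ e he _ (hpick e)).symm.trans (hall _ (hpick e))⟩
      · rintro ⟨he, hs⟩
        exact ⟨he, fun v hv => (memσ e he v hv).trans hs⟩
    have h2 : c.supp = ↑(Vc c) := by
      ext v; simp [hVc, SimpleGraph.ConnectedComponent.supp]
    have h3 := hcomp c
    rwa [h1, h2, Nat.card_coe_set_eq, Set.ncard_coe_finset,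
      Nat.card_coe_set_eq, Set.ncard_coe_finset] at h3
  have hVSsub : ∀ c (S : Finset (Sym2 α)), S ⊆ Ec c → VS S ⊆ Vc c := by
    intro c S hS v hv
    obtain ⟨e, heS, hve⟩ := (memVS S v).1 hv
    have heE := mem_filter.1 (hS heS)
    simp only [hVc, mem_filter, mem_univ, true_and]
    rw [memσ e (SimpleGraph.mem_edgeFinset.1 heE.1) v hve, heE.2]
  have covered : ∀ c (S : Finset (Sym2 α)), S ⊆ Ec c → Vc c ⊆ VS S →
      S.card ≤ (VS S).card := by
    intro c S hS hcov
    have : VS S = Vc c := Subset.antisymm (hVSsub c S hS) hcov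
    rw [this]
    exact le_trans (card_le_card hS) (hcomp' c)
  have augment : ∀ c (S : Finset (Sym2 α)), S ⊆ Ec c → S.Nonempty → ¬ (Vc c ⊆ VS S) →
      ∃ e, e ∈ Ec c ∧ e ∉ S ∧ (VS (insert e S)).card = (VS S).card + 1 := by
    intro c S hS ⟨e₀, he₀⟩ hncov
    obtain ⟨w, hwVc, hwn⟩ := not_subset.1 hncov
    have he₀E := mem_filter.1 (hS he₀)
    have he₀set : e₀ ∈ G.edgeSet := SimpleGraph.mem_edgeFinset.1 he₀E.1
    set z := (Quot.out e₀).1 with hz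
    have hzVS : z ∈ VS S := (memVS S z).2 ⟨e₀, he₀, hpick e₀⟩
    have hzc : G.connectedComponentMk z = c := by
      have := hVSsub c S hS hzVS
      simpa [hVc] using this
    have hwc : G.connectedComponentMk w = c := by simpa [hVc] using hwVc
    have hreach : G.Reachable w z :=
      SimpleGraph.ConnectedComponent.exact (hwc.trans hzc.symm)
    obtain ⟨p⟩ := hreach
    obtain ⟨x, y, hxy, hx, hy, hwx⟩ := walk_cross G p (· ∈ VS S) hwn hzVS
    have hec : s(x, y) ∈ G.edgeSet := hxy
    have hxc : G.connectedComponentMk x = c :=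
      (SimpleGraph.ConnectedComponent.sound hwx).symm.trans hwc
    have hσc : σ s(x, y) = c := by
      rw [← memσ _ hec x (Sym2.mem_mk_left _ _)]; exact hxc
    have heEc : s(x, y) ∈ Ec c := by
      simp only [hEc, mem_filter, hσc, and_true, hE, SimpleGraph.mem_edgeFinset]
      exact hec
    have heS : s(x, y) ∉ S := fun hmem => hx ((memVS S x).2 ⟨_, hmem, Sym2.mem_mk_left _ _⟩)
    refine ⟨s(x, y), heEc, heS, ?_⟩
    have hins : VS (insert s(x, y) S) = insert x (VS S) := by
      ext v
      simp only [memVS, mem_insert]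
      constructor
      · rintro ⟨e, he, hve⟩
        rcases he with rfl | heS'
        · rcases Sym2.mem_iff.1 hve with rfl | rfl
          · exact Or.inl rfl
          · exact Or.inr ((memVS S v).1 hy)
        · exact Or.inr ⟨e, heS', hve⟩
      · rintro (rfl | ⟨e, heS', hve⟩)
        · exact ⟨_, Or.inl rfl, Sym2.mem_mk_left _ _⟩
        · exact ⟨e, Or.inr heS', hve⟩
    rw [hins, card_insert_of_notMem hx]
  have cover_c : ∀ (k : ℕ) (c) (S : Finset (Sym2 α)), S ⊆ Ec c →
      (Ec c).card - S.card ≤ k → S.card ≤ (VS S).card := by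
    intro k
    induction k with
    | zero =>
      intro c S hS hk
      rcases S.eq_empty_or_nonempty with rfl | hne
      · simp
      by_cases hcov : Vc c ⊆ VS S
      · exact covered c S hS hcov
      · obtain ⟨e, heEc, heS, -⟩ := augment c S hS hne hcov
        have : S = Ec c := eq_of_subset_of_card_le hS (by omega)
        exact absurd (this ▸ heEc) heS
    | succ k ih =>
      intro c S hS hk
      rcases S.eq_empty_or_nonempty with rfl | hne
      · simp
      by_cases hcov : Vc c ⊆ VS S
      · exact covered c S hS hcov
      · obtain ⟨e, heEc, heS, hcard⟩ := augment c S hS hne hcov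
        have hsub' : insert e S ⊆ Ec c := insert_subset heEc hS
        have hc1 : (insert e S).card = S.card + 1 := card_insert_of_notMem heS
        have hle : (Ec c).card - (insert e S).card ≤ k := by
          have := card_le_card hsub'
          omega
        have := ih c (insert e S) hsub' hle
        omega
  have cover : ∀ S : Finset (Sym2 α), S ⊆ E → S.card ≤ (VS S).card := by
    intro S hS
    have hmaps : ∀ e ∈ S, σ e ∈ S.image σ := fun e he => mem_image_of_mem σ he
    rw [card_eq_sum_card_fiberwise hmaps]
    have hVSdecomp : VS S = (S.image σ).biUnion (fun c => VS (S.filter (fun e => σ e = c))) := by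
      ext v
      simp only [mem_biUnion, memVS, mem_filter]
      constructor
      · rintro ⟨e, he, hve⟩
        exact ⟨σ e, mem_image_of_mem σ he, e, ⟨he, rfl⟩, hve⟩
      · rintro ⟨c, -, e, ⟨he, -⟩, hve⟩
        exact ⟨e, he, hve⟩
    rw [hVSdecomp, card_biUnion]
    · apply Finset.sum_le_sum
      intro c hc
      have hfsub : S.filter (fun e => σ e = c) ⊆ Ec c := by
        intro e he
        have := mem_filter.1 he
        exact mem_filter.2 ⟨hS this.1, this.2⟩
      exact cover_c _ c _ hfsub le_rfl
    · intro c1 h1 c2 h2 hne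
      apply Finset.disjoint_left.2
      intro v hv1 hv2
      have m1 := hVSsub c1 _ (fun e he => mem_filter.2 ⟨hS (mem_filter.1 he).1,
        (mem_filter.1 he).2⟩) hv1
      have m2 := hVSsub c2 _ (fun e he => mem_filter.2 ⟨hS (mem_filter.1 he).1,
        (mem_filter.1 he).2⟩) hv2
      simp only [hVc, mem_filter] at m1 m2
      exact hne (m1.2.symm.trans m2.2)
  have hall := (Finset.all_card_le_biUnion_card_iff_existsInjective'
    (ι := {e : Sym2 α // e ∈ E}) (fun e => univ.filter (· ∈ e.1))).1 ?_
  · obtain ⟨f₀, hf₀inj, hf₀mem⟩ := hall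
    refine ⟨fun e => if h : e ∈ E then f₀ ⟨e, h⟩ else (Quot.out e).1, ?_, ?_⟩
    · intro e1 he1 e2 he2 heq
      have h1 : e1 ∈ E := SimpleGraph.mem_edgeFinset.2 he1
      have h2 : e2 ∈ E := SimpleGraph.mem_edgeFinset.2 he2
      dsimp only at heq
      rw [dif_pos h1, dif_pos h2] at heq
      exact congrArg Subtype.val (hf₀inj heq)
    · intro e he
      have h1 : e ∈ E := SimpleGraph.mem_edgeFinset.2 he
      dsimp only
      rw [dif_pos h1]
      have := hf₀mem ⟨e, h1⟩
      simpa using this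
  · intro s
    have himg : s.card = (s.image Subtype.val).card :=
      (card_image_of_injective s Subtype.val_injective).symm
    rw [himg]
    have hbi : s.biUnion (fun e => univ.filter (· ∈ e.1)) = VS (s.image Subtype.val) := by
      ext v
      simp only [mem_biUnion, memVS, mem_image, mem_filter, mem_univ, true_and]
      constructor
      · rintro ⟨e, he, hv⟩
        exact ⟨e.1, ⟨e, he, rfl⟩, hv⟩
      · rintro ⟨e, ⟨e', he', rfl⟩, hv⟩
        exact ⟨e', he', hv⟩
    rw [hbi]
    apply cover
    intro e he
    obtain ⟨e', -, rfl⟩ := mem_image.1 he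
    exact e'.2

lemma pair_eq_cases {β : Type*} [DecidableEq β] {x1 y1 x2 y2 : β}
    (h : ({x1, y1} : Finset β) = {x2, y2}) (hxy : x1 ≠ y1) :
    (x1 = x2 ∧ y1 = y2) ∨ (x1 = y2 ∧ y1 = x2) := by
  have h1 : x1 = x2 ∨ x1 = y2 := by
    have := h ▸ Finset.mem_insert_self x1 {y1}
    simpa using this
  have h2 : y1 = x2 ∨ y1 = y2 := by
    have hm : y1 ∈ ({x1, y1} : Finset β) := by simp
    rw [h] at hm
    simpa using hm
  rcases h1 with rfl | rfl
  · rcases h2 with rfl | h2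
    · exact absurd rfl hxy
    · exact Or.inl ⟨rfl, h2⟩
  · rcases h2 with h2 | rfl
    · exact Or.inr ⟨rfl, h2⟩
    · exact absurd rfl hxy

lemma qedge_fst {n : ℕ} (i j : Fin n) (A B : ℕ) : qedge i j A B i = A := by
  simp [qedge]

lemma qedge_snd {n : ℕ} {i j : Fin n} (hij : i ≠ j) (A B : ℕ) : qedge i j A B j = B := by
  simp [qedge, hij.symm]

lemma qedge_ne_zero {n : ℕ} {i j k : Fin n} {A B : ℕ} (h : qedge i j A B k ≠ 0) :
    k = i ∨ k = j := by
  by_cases h1 : k = i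
  · exact Or.inl h1
  by_cases h2 : k = j
  · exact Or.inr h2
  exact absurd (by simp [qedge, h1, h2]) h

lemma qsupport_qedge {n : ℕ} {i j : Fin n} (hij : i ≠ j) {A B : ℕ} (hA : A ≠ 0) (hB : B ≠ 0) :
    qsupport (qedge i j A B) = {i, j} := by
  ext k
  simp only [qsupport, mem_filter, mem_univ, true_and, mem_insert, mem_singleton]
  constructor
  · exact qedge_ne_zero
  · rintro (rfl | rfl)
    · simpa [qedge_fst] using hA
    · rw [qedge_snd hij]; exact hB

end AuxLemmas

/-- If `G` is bipartite with all components trees or unicyclic, and `H` has no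
`(q+1)`-copy of `G`, then `H_{(a,b),(ā,b̄)}` contains no `K_{R,R}` with
`R = R(|V(G)|,|V(G)|)`. -/

theorem no_KRR {α : Type} [Fintype α] (G : SimpleGraph α) (hbip : G.Colorable 2)
    (hcomp : ∀ c : G.ConnectedComponent,
      Nat.card {e : Sym2 α | e ∈ G.edgeSet ∧ ∀ v ∈ e, G.connectedComponentMk v = c}
        ≤ Nat.card c.supp)
    (n q a b : ℕ) (ha : 1 ≤ a) (haq : a ≤ q) (hb : 1 ≤ b) (hbq : b ≤ q)
    (H : Finset (Fin n → ℕ)) (hH : H ⊆ Qset q n)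
    (hfree : ¬ ContainsSCopy (q + 1) G H) :
    ¬ ∃ (A B : Finset (Fin n)), Disjoint A B ∧
      A.card = bipRamsey (Fintype.card α) ∧ B.card = bipRamsey (Fintype.card α) ∧
      ∀ i ∈ A, ∀ j ∈ B,
        (SimpleGraph.fromRel (fun i j : Fin n =>
          qedge i j a b ∈ H ∧ qedge i j (q + 1 - a) (q + 1 - b) ∈ H)).Adj i j := by
  classical
  rintro ⟨A, B, hdis, hA, hB, hadj⟩
  set m := Fintype.card α with hm
  -- Step 1: Ramsey extraction
  obtain ⟨P, Q, hPQ, hPcard, hQcard, hkey⟩ :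
      ∃ P Q : Finset (Fin n), Disjoint P Q ∧ P.card = m ∧ Q.card = m ∧
        ∀ i ∈ P, ∀ j ∈ Q, qedge i j a b ∈ H ∧ qedge i j (q+1-a) (q+1-b) ∈ H := by
    set c := bipRamsey m with hc
    set eA := A.orderIsoOfFin hA with heA
    set eB := B.orderIsoOfFin hB with heB
    set χ : Fin c → Fin c → Bool := fun x y =>
      decide (qedge (eA x : Fin n) (eB y : Fin n) a b ∈ H ∧
        qedge (eA x : Fin n) (eB y : Fin n) (q+1-a) (q+1-b) ∈ H) with hχ
    obtain ⟨A0, B0, col, hA0, hB0, hcol⟩ := bipRamsey_spec m χ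
    have hvA : ∀ x : Fin c, (eA x : Fin n) ∈ A := fun x => (eA x).2
    have hvB : ∀ y : Fin c, (eB y : Fin n) ∈ B := fun y => (eB y).2
    have hinjA : Function.Injective (fun x : Fin c => (eA x : Fin n)) := by
      intro x y h
      exact eA.injective (Subtype.ext h)
    have hinjB : Function.Injective (fun y : Fin c => (eB y : Fin n)) := by
      intro x y h
      exact eB.injective (Subtype.ext h)
    have hsubA : A0.image (fun x : Fin c => (eA x : Fin n)) ⊆ A :=
      image_subset_iff.2 (fun x _ => hvA x)
    have hsubB : B0.image (fun y : Fin c => (eB y : Fin n)) ⊆ B :=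
      image_subset_iff.2 (fun y _ => hvB y)
    cases col with
    | true =>
      refine ⟨A0.image (fun x : Fin c => (eA x : Fin n)),
        B0.image (fun y : Fin c => (eB y : Fin n)),
        Disjoint.mono hsubA hsubB hdis,
        by rw [card_image_of_injective _ hinjA]; exact hA0,
        by rw [card_image_of_injective _ hinjB]; exact hB0, ?_⟩
      intro i hi j hj
      obtain ⟨x, hx, rfl⟩ := mem_image.1 hi
      obtain ⟨y, hy, rfl⟩ := mem_image.1 hj
      have := hcol x hx y hy
      rw [hχ] at this
      exact of_decide_eq_true this
    | false =>
      refine ⟨B0.image (fun y : Fin c => (eB y : Fin n)),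
        A0.image (fun x : Fin c => (eA x : Fin n)),
        Disjoint.mono hsubB hsubA hdis.symm,
        by rw [card_image_of_injective _ hinjB]; exact hB0,
        by rw [card_image_of_injective _ hinjA]; exact hA0, ?_⟩
      intro i hi j hj
      obtain ⟨y, hy, rfl⟩ := mem_image.1 hi
      obtain ⟨x, hx, rfl⟩ := mem_image.1 hj
      have hfalse := hcol x hx y hy
      rw [hχ] at hfalse
      have hnotrel : ¬ (qedge (eA x : Fin n) (eB y : Fin n) a b ∈ H ∧
          qedge (eA x : Fin n) (eB y : Fin n) (q+1-a) (q+1-b) ∈ H) :=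
        of_decide_eq_false hfalse
      have hadjxy := hadj (eA x : Fin n) (hvA x) (eB y : Fin n) (hvB y)
      rw [SimpleGraph.fromRel_adj] at hadjxy
      rcases hadjxy.2 with hrel | hrel
      · exact absurd hrel hnotrel
      · exact hrel
  -- Step 2: coloring and vertex embedding
  obtain ⟨C⟩ := hbip
  set S0 : Finset α := univ.filter (fun v => C v = 0) with hS0def
  set S1 : Finset α := univ.filter (fun v => ¬ C v = 0) with hS1def
  have hS01 : S0.card + S1.card = m := by
    rw [hS0def, hS1def, card_filter_add_card_filter_not, card_univ]
  obtain ⟨P0, hP0sub, hP0card⟩ := exists_subset_card_eq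
    (show S0.card ≤ P.card by rw [hPcard]; omega)
  obtain ⟨Q0, hQ0sub, hQ0card⟩ := exists_subset_card_eq
    (show S1.card ≤ Q.card by rw [hQcard]; omega)
  set e0 := Finset.equivOfCardEq (hP0card.symm : S0.card = P0.card) with he0
  set e1 := Finset.equivOfCardEq (hQ0card.symm : S1.card = Q0.card) with he1
  set ι : α → Fin n := fun v =>
    if h : C v = 0 then (e0 ⟨v, by simp [hS0def, h]⟩ : Fin n)
    else (e1 ⟨v, by simp [hS1def, h]⟩ : Fin n) with hι
  have hιP : ∀ v, C v = 0 → ι v ∈ P := by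
    intro v h
    rw [hι]
    dsimp only
    rw [dif_pos h]
    exact hP0sub (e0 _).2
  have hιQ : ∀ v, ¬ C v = 0 → ι v ∈ Q := by
    intro v h
    rw [hι]
    dsimp only
    rw [dif_neg h]
    exact hQ0sub (e1 _).2
  have hιinj : Function.Injective ι := by
    intro u v h
    by_cases hu : C u = 0 <;> by_cases hv : C v = 0
    · rw [hι] at h
      dsimp only at h
      rw [dif_pos hu, dif_pos hv] at h
      have := e0.injective (Subtype.ext h)
      exact congrArg Subtype.val this
    · exact absurd (h ▸ hιP u hu) (fun hmem => disjoint_left.1 hPQ (hιP u hu) (h ▸ hιQ v hv))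
    · exact absurd (h ▸ hιQ u hu) (fun hmem => disjoint_left.1 hPQ (hιP v hv) (h.symm ▸ hιQ u hu))
    · rw [hι] at h
      dsimp only at h
      rw [dif_neg hu, dif_neg hv] at h
      have := e1.injective (Subtype.ext h)
      exact congrArg Subtype.val this
  -- Step 3: orientation
  obtain ⟨f, finj, fmem⟩ := edge_injection G hcomp
  set E := G.edgeFinset with hE
  have hLR : ∀ e : {e : Sym2 α // e ∈ E}, ∃ p : α × α,
      e.1 = s(p.1, p.2) ∧ C p.1 = 0 ∧ ¬ C p.2 = 0 ∧ G.Adj p.1 p.2 := by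
    rintro ⟨e, he⟩
    have heset : e ∈ G.edgeSet := SimpleGraph.mem_edgeFinset.1 he
    have hexy : e = s((Quot.out e).1, (Quot.out e).2) := (Quot.out_eq e).symm
    set x := (Quot.out e).1
    set y := (Quot.out e).2
    have hadjxy : G.Adj x y := by rw [hexy] at heset; exact heset
    have hCxy : C x ≠ C y := C.valid hadjxy
    have h2 : ∀ t : Fin 2, t = 0 ∨ t = 1 := by decide
    by_cases hx0 : C x = 0
    · exact ⟨(x, y), hexy, hx0, fun h => hCxy (hx0.trans h.symm), hadjxy⟩
    · have hy0 : C y = 0 := by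
        rcases h2 (C y) with h | h
        · exact h
        · rcases h2 (C x) with h' | h'
          · exact absurd h' hx0
          · exact absurd (h'.trans h.symm) hCxy
      exact ⟨(y, x), hexy.trans Sym2.eq_swap, hy0, hx0, hadjxy.symm⟩
  set L : {e : Sym2 α // e ∈ E} → α := fun e => (Classical.choose (hLR e)).1 with hL
  set R : {e : Sym2 α // e ∈ E} → α := fun e => (Classical.choose (hLR e)).2 with hR
  have hspec : ∀ e : {e : Sym2 α // e ∈ E},
      e.1 = s(L e, R e) ∧ C (L e) = 0 ∧ ¬ C (R e) = 0 ∧ G.Adj (L e) (R e) :=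
    fun e => Classical.choose_spec (hLR e)
  set t : {e : Sym2 α // e ∈ E} → Bool := fun e =>
    if q+1 ≤ 2*a then (if q+1 ≤ 2*b then true else decide (f e.1 = R e))
    else (if q+1 ≤ 2*b then decide (f e.1 = L e) else false) with ht
  set va : {e : Sym2 α // e ∈ E} → ℕ := fun e => if t e then a else q+1-a with hva
  set vb : {e : Sym2 α // e ∈ E} → ℕ := fun e => if t e then b else q+1-b with hvb
  have hva_pos : ∀ e, va e ≠ 0 := by
    intro e
    rw [hva]
    dsimp only
    split <;> omega
  have hvb_pos : ∀ e, vb e ≠ 0 := by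
    intro e
    rw [hvb]
    dsimp only
    split <;> omega
  set xe : {e : Sym2 α // e ∈ E} → (Fin n → ℕ) :=
    fun e => qedge (ι (L e)) (ι (R e)) (va e) (vb e) with hxe
  have hLP : ∀ e, ι (L e) ∈ P := fun e => hιP _ (hspec e).2.1
  have hRQ : ∀ e, ι (R e) ∈ Q := fun e => hιQ _ (hspec e).2.2.1
  have hneLR : ∀ e, ι (L e) ≠ ι (R e) :=
    fun e h => disjoint_left.1 hPQ (hLP e) (h ▸ hRQ e)
  have hmemH : ∀ e, xe e ∈ H := by
    intro e
    have hk := hkey _ (hLP e) _ (hRQ e)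
    rw [hxe]
    dsimp only
    rw [hva, hvb]
    dsimp only
    cases htc : t e
    · simpa using hk.2
    · simpa using hk.1
  have hsupp : ∀ e, qsupport (xe e) = {ι (L e), ι (R e)} := by
    intro e
    rw [hxe]
    exact qsupport_qedge (hneLR e) (hva_pos e) (hvb_pos e)
  have hedgeset : ∀ e : {e : Sym2 α // e ∈ E}, e.1 ∈ G.edgeSet :=
    fun e => SimpleGraph.mem_edgeFinset.1 e.2
  have hxinj : Function.Injective xe := by
    intro e e' h
    have hs : ({ι (L e), ι (R e)} : Finset (Fin n)) = {ι (L e'), ι (R e')} := by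
      rw [← hsupp e, ← hsupp e', h]
    rcases pair_eq_cases hs (hneLR e) with ⟨h1, h2⟩ | ⟨h1, h2⟩
    · have hLeq : L e = L e' := hιinj h1
      have hReq : R e = R e' := hιinj h2
      apply Subtype.ext
      rw [(hspec e).1, (hspec e').1, hLeq, hReq]
    · exact absurd (h1 ▸ hLP e) (fun hmem => disjoint_left.1 hPQ hmem (hRQ e'))
  -- conclusion
  set H' : Finset (Fin n → ℕ) := (univ : Finset {e : Sym2 α // e ∈ E}).image xe with hH'
  apply hfree
  refine ⟨H', ?_, ι, hιinj, ?_, ?_, ?_⟩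
  · intro x hx
    obtain ⟨e, -, rfl⟩ := mem_image.1 hx
    exact hmemH e
  · intro u v
    constructor
    · intro huv
      have he : s(u, v) ∈ E := SimpleGraph.mem_edgeFinset.2 huv
      refine ⟨xe ⟨_, he⟩, mem_image_of_mem _ (mem_univ _), ?_⟩
      rw [hsupp ⟨_, he⟩]
      have hseq : s(u, v) = s(L ⟨_, he⟩, R ⟨_, he⟩) := (hspec ⟨_, he⟩).1
      rcases Sym2.eq_iff.1 hseq with ⟨h1, h2⟩ | ⟨h1, h2⟩
      · rw [← h1, ← h2]
      · rw [← h1, ← h2]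
        exact pair_comm _ _
    · rintro ⟨x, hx, hsup⟩
      obtain ⟨e, -, rfl⟩ := mem_image.1 hx
      rw [hsupp e] at hsup
      rcases pair_eq_cases hsup (hneLR e) with ⟨h1, h2⟩ | ⟨h1, h2⟩
      · have := (hspec e).2.2.2
        rwa [hιinj h1, hιinj h2] at this
      · have := ((hspec e).2.2.2).symm
        rwa [hιinj h1, hιinj h2] at this
  · rw [hH', card_image_of_injective _ hxinj, card_univ, Fintype.card_coe]
    rw [Nat.card_coe_set_eq, ← SimpleGraph.coe_edgeFinset, Set.ncard_coe_finset]
  · rintro x hx y hy hxy i hxi hyi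
    obtain ⟨e, -, rfl⟩ := mem_image.1 hx
    obtain ⟨e', -, rfl⟩ := mem_image.1 hy
    have hee' : e ≠ e' := fun h => hxy (congrArg xe h)
    have hfinj : f e.1 = f e'.1 → False := by
      intro h
      exact hee' (Subtype.ext (finj (hedgeset e) (hedgeset e') h))
    have hfmem : ∀ e'' : {e : Sym2 α // e ∈ E}, f e''.1 = L e'' ∨ f e''.1 = R e'' := by
      intro e''
      have hmem2 : f e''.1 ∈ s(L e'', R e'') := by
        rw [← (hspec e'').1]
        exact fmem e''.1 (hedgeset e'')
      exact Sym2.mem_iff.1 hmem2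
    have hvaT : ∀ e'', t e'' = true → va e'' = a := fun e'' h => by simp [hva, h]
    have hvaF : ∀ e'', t e'' = false → va e'' = q+1-a := fun e'' h => by simp [hva, h]
    have hvbT : ∀ e'', t e'' = true → vb e'' = b := fun e'' h => by simp [hvb, h]
    have hvbF : ∀ e'', t e'' = false → vb e'' = q+1-b := fun e'' h => by simp [hvb, h]
    have htT : q+1 ≤ 2*a → q+1 ≤ 2*b → ∀ e'' : {e : Sym2 α // e ∈ E}, t e'' = true :=
      fun h1 h2 e'' => by simp [ht, h1, h2]
    have htF : ¬(q+1 ≤ 2*a) → ¬(q+1 ≤ 2*b) → ∀ e'' : {e : Sym2 α // e ∈ E}, t e'' = false :=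
      fun h1 h2 e'' => by simp [ht, h1, h2]
    have htAB : q+1 ≤ 2*a → ¬(q+1 ≤ 2*b) → ∀ e'' : {e : Sym2 α // e ∈ E},
        (t e'' = true ↔ f e''.1 = R e'') := fun h1 h2 e'' => by simp [ht, h1, h2]
    have htBA : ¬(q+1 ≤ 2*a) → q+1 ≤ 2*b → ∀ e'' : {e : Sym2 α // e ∈ E},
        (t e'' = true ↔ f e''.1 = L e'') := fun h1 h2 e'' => by simp [ht, h1, h2]
    rw [hxe] at hxi hyi
    dsimp only at hxi hyi
    rcases qedge_ne_zero hxi with h1 | h1 <;> rcases qedge_ne_zero hyi with h2 | h2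
    · -- shared left vertex
      have hW : L e = L e' := hιinj (h1.symm.trans h2)
      have hxval : xe e i = va e := by rw [hxe]; dsimp only; rw [h1, qedge_fst]
      have hyval : xe e' i = va e' := by rw [hxe]; dsimp only; rw [h2, qedge_fst]
      rw [hxval, hyval]
      by_cases h2a : q+1 ≤ 2*a <;> by_cases h2b : q+1 ≤ 2*b
      · rw [hvaT e (htT h2a h2b e), hvaT e' (htT h2a h2b e')]; omega
      · cases hte : t e <;> cases hte' : t e'
        · exfalso
          have hfe : f e.1 = L e := by
            refine (hfmem e).resolve_right (fun hh => ?_)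
            have := (htAB h2a h2b e).2 hh
            rw [hte] at this
            exact Bool.false_ne_true this
          have hfe' : f e'.1 = L e' := by
            refine (hfmem e').resolve_right (fun hh => ?_)
            have := (htAB h2a h2b e').2 hh
            rw [hte'] at this
            exact Bool.false_ne_true this
          exact hfinj (hfe.trans (hW ▸ hfe'.symm))
        · rw [hvaF e hte, hvaT e' hte']; omega
        · rw [hvaT e hte, hvaF e' hte']; omega
        · rw [hvaT e hte, hvaT e' hte']; omega
      · cases hte : t e <;> cases hte' : t e'
        · rw [hvaF e hte, hvaF e' hte']; omega
        · rw [hvaF e hte, hvaT e' hte']; omega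
        · rw [hvaT e hte, hvaF e' hte']; omega
        · exfalso
          have hfe : f e.1 = L e := (htBA h2a h2b e).1 hte
          have hfe' : f e'.1 = L e' := (htBA h2a h2b e').1 hte'
          exact hfinj (hfe.trans (hW ▸ hfe'.symm))
      · rw [hvaF e (htF h2a h2b e), hvaF e' (htF h2a h2b e')]; omega
    · -- mixed: impossible
      exfalso
      have hmix : ι (L e) ∈ Q := by rw [h1.symm.trans h2]; exact hRQ e'
      exact disjoint_left.1 hPQ (hLP e) hmix
    · exfalso
      have hmix : ι (L e') ∈ Q := by rw [h2.symm.trans h1]; exact hRQ e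
      exact disjoint_left.1 hPQ (hLP e') hmix
    · -- shared right vertex
      have hW : R e = R e' := hιinj (h1.symm.trans h2)
      have hxval : xe e i = vb e := by
        rw [hxe]; dsimp only; rw [h1, qedge_snd (hneLR e)]
      have hyval : xe e' i = vb e' := by
        rw [hxe]; dsimp only; rw [h2, qedge_snd (hneLR e')]
      rw [hxval, hyval]
      by_cases h2a : q+1 ≤ 2*a <;> by_cases h2b : q+1 ≤ 2*b
      · rw [hvbT e (htT h2a h2b e), hvbT e' (htT h2a h2b e')]; omega
      · cases hte : t e <;> cases hte' : t e'
        · rw [hvbF e hte, hvbF e' hte']; omega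
        · rw [hvbF e hte, hvbT e' hte']; omega
        · rw [hvbT e hte, hvbF e' hte']; omega
        · exfalso
          have hfe : f e.1 = R e := (htAB h2a h2b e).1 hte
          have hfe' : f e'.1 = R e' := (htAB h2a h2b e').1 hte'
          exact hfinj (hfe.trans (hW ▸ hfe'.symm))
      · cases hte : t e <;> cases hte' : t e'
        · exfalso
          have hfe : f e.1 = R e := by
            refine (hfmem e).resolve_left (fun hh => ?_)
            have := (htBA h2a h2b e).2 hh
            rw [hte] at this
            exact Bool.false_ne_true this
          have hfe' : f e'.1 = R e' := by
            refine (hfmem e').resolve_left (fun hh => ?_)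
            have := (htBA h2a h2b e').2 hh
            rw [hte'] at this
            exact Bool.false_ne_true this
          exact hfinj (hfe.trans (hW ▸ hfe'.symm))
        · rw [hvbF e hte, hvbT e' hte']; omega
        · rw [hvbT e hte, hvbF e' hte']; omega
        · rw [hvbT e hte, hvbT e' hte']; omega
      · rw [hvbF e (htF h2a h2b e), hvbF e' (htF h2a h2b e')]; omega
end

section
/- Let W : E(K_k) → {0,2,3} be an edge-weighting of the complete graph K_k, and let u, v be two vertices. Define W^{u→v} by: W^{u→v}(uv) = 0, W^{u→v}(ux) = W(vx) for all x ≠ u, v, and W^{u→v}(e) = W(e) for all edges e not incident to u. If W satisfies Condition (⋆), then so does W^{u→v}. Moreover, if W(uv) = i and d_W(v) − d_W(u) ≥ i, then w(W) ≤ w(W^{u→v}), and if d_W(v) − d_W(u) > i, then w(W) < w(W^{u→v}). -/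
open Finset

/-- Condition (⋆): the 3-edges form a triangle-free graph, and every 4-cycle of
3-edges has a 0-diagonal. -/
def StarCond {k : ℕ} (W : Sym2 (Fin k) → ℕ) : Prop :=
  (∀ u v x : Fin k, u ≠ v → v ≠ x → u ≠ x →
    W s(u, v) = 3 → W s(v, x) = 3 → W s(x, u) = 3 → False) ∧
  (∀ u v x y : Fin k, u ≠ v → u ≠ x → u ≠ y → v ≠ x → v ≠ y → x ≠ y →
    W s(u, v) = 3 → W s(v, x) = 3 → W s(x, y) = 3 → W s(y, u) = 3 →
    W s(u, x) = 0 ∨ W s(v, y) = 0)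

/-- The total weight of an edge-weighting of `K_k`. -/
def totalWeight {k : ℕ} (W : Sym2 (Fin k) → ℕ) : ℕ :=
  ∑ e ∈ (⊤ : SimpleGraph (Fin k)).edgeFinset, W e

/-- The weighted degree of a vertex. -/
def degW {k : ℕ} (W : Sym2 (Fin k) → ℕ) (v : Fin k) : ℕ :=
  ∑ x ∈ Finset.univ.erase v, W s(v, x)

lemma sum_incident {k : ℕ} (u : Fin k) (f : Sym2 (Fin k) → ℕ) :
    ∑ e ∈ (⊤ : SimpleGraph (Fin k)).edgeFinset.filter (fun e => u ∈ e), f e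
      = ∑ x ∈ Finset.univ.erase u, f s(u, x) := by
  have himg : (Finset.univ.erase u).image (fun x => s(u, x))
      = (⊤ : SimpleGraph (Fin k)).edgeFinset.filter (fun e => u ∈ e) := by
    ext e
    induction e using Sym2.ind with
    | _ a b =>
      simp only [Finset.mem_image, Finset.mem_erase, Finset.mem_univ, and_true,
        Finset.mem_filter, SimpleGraph.mem_edgeFinset, SimpleGraph.mem_edgeSet,
        SimpleGraph.top_adj, Sym2.mem_iff, Sym2.eq_iff]
      aesop
  rw [← himg, Finset.sum_image]
  intro x hx y hy hxy
  exact (Sym2.congr_right).mp hxy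

lemma total_split {k : ℕ} (u : Fin k) (f : Sym2 (Fin k) → ℕ) :
    totalWeight f = (∑ x ∈ Finset.univ.erase u, f s(u, x))
      + ∑ e ∈ (⊤ : SimpleGraph (Fin k)).edgeFinset.filter (fun e => u ∉ e), f e := by
  rw [totalWeight, ← Finset.sum_filter_add_sum_filter_not _ (fun e => u ∈ e), sum_incident]

/-- Zykov symmetrization preserves Condition (⋆) and does not decrease the weight when
`d_W(v) − d_W(u) ≥ W(uv)` (strictly increases it when the inequality is strict). -/
theorem symmetrization (k : ℕ) (W W' : Sym2 (Fin k) → ℕ) (u v : Fin k) (huv : u ≠ v)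
    (hvals : ∀ e ∈ (⊤ : SimpleGraph (Fin k)).edgeFinset, W e = 0 ∨ W e = 2 ∨ W e = 3)
    (h1 : W' s(u, v) = 0)
    (h2 : ∀ x, x ≠ u → x ≠ v → W' s(u, x) = W s(v, x))
    (h3 : ∀ e : Sym2 (Fin k), u ∉ e → W' e = W e) :
    (StarCond W → StarCond W') ∧
    (degW W u + W s(u, v) ≤ degW W v → totalWeight W ≤ totalWeight W') ∧
    (degW W u + W s(u, v) < degW W v → totalWeight W < totalWeight W') := by
  -- basic facts
  have hne3 : ∀ b : Fin k, W' s(u, b) = 3 → b ≠ v := by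
    intro b hb hbv; subst hbv; rw [h1] at hb; omega
  have h3' : ∀ a b : Fin k, u ≠ a → u ≠ b → W' s(a, b) = W s(a, b) := by
    intro a b ha hb
    exact h3 _ (by simp [Sym2.mem_iff, ha, hb])
  constructor
  · intro hs
    constructor
    · -- triangle-freeness
      -- helper: case u = first vertex
      have tri : ∀ b c : Fin k, u ≠ b → b ≠ c → u ≠ c →
          W' s(u, b) = 3 → W' s(b, c) = 3 → W' s(c, u) = 3 → False := by
        intro b c hub hbc huc e1 e2 e3
        have hbv : b ≠ v := hne3 b e1
        have hcv : c ≠ v := hne3 c (by rwa [Sym2.eq_swap] at e3)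
        have w1 : W s(v, b) = 3 := by rw [← h2 b (Ne.symm hub) hbv]; exact e1
        have w2 : W s(v, c) = 3 := by
          rw [← h2 c (Ne.symm huc) hcv, ← Sym2.eq_swap]; exact e3
        have w3 : W s(b, c) = 3 := by rw [← h3' b c hub huc]; exact e2
        exact hs.1 v b c (Ne.symm hbv) hbc (Ne.symm hcv) w1 w3
          (by rwa [Sym2.eq_swap])
      intro a b c hab hbc hac e1 e2 e3
      by_cases hua : u = a
      · subst hua; exact tri b c hab hbc hac e1 e2 e3
      by_cases hub : u = b
      · subst hub; exact tri c a hbc (Ne.symm hac) (Ne.symm hab) e2 e3 e1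
      by_cases huc : u = c
      · subst huc; exact tri a b (Ne.symm hac) hab (Ne.symm hbc) e3 e1 e2
      · rw [h3' a b hua hub] at e1
        rw [h3' b c hub huc] at e2
        rw [h3' c a huc hua] at e3
        exact hs.1 a b c hab hbc hac e1 e2 e3
    · -- 4-cycle condition
      have cyc : ∀ b c d : Fin k, u ≠ b → u ≠ c → u ≠ d → b ≠ c → b ≠ d → c ≠ d →
          W' s(u, b) = 3 → W' s(b, c) = 3 → W' s(c, d) = 3 → W' s(d, u) = 3 →
          W' s(u, c) = 0 ∨ W' s(b, d) = 0 := by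
        intro b c d hub huc hud hbc hbd hcd e1 e2 e3 e4
        have hbv : b ≠ v := hne3 b e1
        have hdv : d ≠ v := hne3 d (by rwa [Sym2.eq_swap] at e4)
        by_cases hcv : c = v
        · subst hcv; left; exact h1
        · have w1 : W s(v, b) = 3 := by rw [← h2 b (Ne.symm hub) hbv]; exact e1
          have w2 : W s(b, c) = 3 := by rw [← h3' b c hub huc]; exact e2
          have w3 : W s(c, d) = 3 := by rw [← h3' c d huc hud]; exact e3
          have w4 : W s(d, v) = 3 := by
            rw [Sym2.eq_swap, ← h2 d (Ne.symm hud) hdv, ← Sym2.eq_swap]; exact e4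
          rcases hs.2 v b c d (Ne.symm hbv) (Ne.symm hcv) (Ne.symm hdv) hbc hbd hcd
            w1 w2 w3 w4 with h0 | h0
          · left; rw [h2 c (Ne.symm huc) hcv]; exact h0
          · right; rw [h3' b d hub hud]; exact h0
      intro a b c d hab hac had hbc hbd hcd e1 e2 e3 e4
      by_cases hua : u = a
      · subst hua; exact cyc b c d hab hac had hbc hbd hcd e1 e2 e3 e4
      by_cases hub : u = b
      · subst hub
        rcases cyc c d a hbc hbd (Ne.symm hab) hcd (Ne.symm hac) (Ne.symm had)
          e2 e3 e4 e1 with h0 | h0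
        · right; exact h0
        · left; rwa [Sym2.eq_swap]
      by_cases huc : u = c
      · subst huc
        rcases cyc d a b hcd (Ne.symm hac) (Ne.symm hbc) (Ne.symm had) (Ne.symm hbd) hab
          e3 e4 e1 e2 with h0 | h0
        · left; rwa [Sym2.eq_swap]
        · right; rwa [Sym2.eq_swap]
      by_cases hud : u = d
      · subst hud
        rcases cyc a b c (Ne.symm had) (Ne.symm hbd) (Ne.symm hcd) hab hac hbc
          e4 e1 e2 e3 with h0 | h0
        · right; rwa [Sym2.eq_swap]
        · left; exact h0
      · rw [h3' a b hua hub] at e1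
        rw [h3' b c hub huc] at e2
        rw [h3' c d huc hud] at e3
        rw [h3' d a hud hua] at e4
        rcases hs.2 a b c d hab hac had hbc hbd hcd e1 e2 e3 e4 with h0 | h0
        · left; rwa [h3' a c hua huc]
        · right; rwa [h3' b d hub hud]
  · -- weight: key equation
    have key : totalWeight W' + (degW W u + W s(u, v)) = totalWeight W + degW W v := by
      rw [total_split u W', total_split u W]
      have hrest : ∑ e ∈ (⊤ : SimpleGraph (Fin k)).edgeFinset.filter (fun e => u ∉ e), W' e
          = ∑ e ∈ (⊤ : SimpleGraph (Fin k)).edgeFinset.filter (fun e => u ∉ e), W e := by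
        apply Finset.sum_congr rfl
        intro e he
        exact h3 e (Finset.mem_filter.mp he).2
      have hdegu : degW W u = ∑ x ∈ Finset.univ.erase u, W s(u, x) := rfl
      have hvmem : v ∈ Finset.univ.erase u := by
        simp [Ne.symm huv]
      have humem : u ∈ Finset.univ.erase v := by simp [huv]
      have hWsum : ∑ x ∈ Finset.univ.erase u, W' s(u, x)
          = ∑ x ∈ (Finset.univ.erase u).erase v, W s(v, x) := by
        rw [← Finset.add_sum_erase _ _ hvmem, h1, zero_add]
        apply Finset.sum_congr rfl
        intro x hx
        have hx1 := (Finset.mem_erase.mp hx).1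
        have hx2 := (Finset.mem_erase.mp (Finset.mem_erase.mp hx).2).1
        exact h2 x hx2 hx1
      have hdegv : degW W v = W s(u, v) + ∑ x ∈ (Finset.univ.erase v).erase u, W s(v, x) := by
        rw [degW, ← Finset.add_sum_erase _ _ humem, Sym2.eq_swap]
      rw [hrest, hWsum, Finset.erase_right_comm, hdegv, hdegu]
      ring
    constructor <;> intro h <;> omega
end

section
/- For every ε > 0 there exists k₀ such that for all k ≥ k₀: every weighting W : E(K_k) → {0,2,3} satisfying Condition (⋆) has total weight w(W) ≤ (9/4 + ε)·C(k,2). Moreover this bound is asymptotically sharp. -/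
open Finset

namespace StarAux

variable {k : ℕ}

def dS (W : Sym2 (Fin k) → ℕ) (S : Finset (Fin k)) (v : Fin k) : ℕ :=
  ((S.erase v).filter (fun x => W s(v, x) = 3)).card

def zS (W : Sym2 (Fin k) → ℕ) (S : Finset (Fin k)) (v : Fin k) : ℕ :=
  ((S.erase v).filter (fun x => W s(v, x) = 0)).card

def rowS (W : Sym2 (Fin k) → ℕ) (S : Finset (Fin k)) (v : Fin k) : ℕ :=
  ∑ x ∈ S.erase v, W s(v, x)

def PS (W : Sym2 (Fin k) → ℕ) (S : Finset (Fin k)) : ℕ :=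
  ∑ u ∈ S, rowS W S u

lemma PS_erase (W : Sym2 (Fin k) → ℕ) {S : Finset (Fin k)} {v : Fin k} (hv : v ∈ S) :
    PS W S = 2 * rowS W S v + PS W (S.erase v) := by
  unfold PS
  rw [← Finset.add_sum_erase S _ hv]
  have h2 : ∀ u ∈ S.erase v, rowS W S u = W s(u, v) + rowS W (S.erase v) u := by
    intro u hu
    have hvmem : v ∈ S.erase u := by
      rw [Finset.mem_erase]
      exact ⟨fun h => (Finset.mem_erase.mp hu).1 h.symm, hv⟩
    unfold rowS
    rw [← Finset.add_sum_erase _ _ hvmem, Finset.erase_right_comm]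
  rw [Finset.sum_congr rfl h2, Finset.sum_add_distrib]
  have h3 : ∑ u ∈ S.erase v, W s(u, v) = rowS W S v := by
    unfold rowS
    exact Finset.sum_congr rfl (fun u _ => by rw [Sym2.eq_swap])
  rw [h3]; ring

lemma handshake (W : Sym2 (Fin k) → ℕ) :
    PS W (Finset.univ : Finset (Fin k)) = 2 * totalWeight W := by
  classical
  have h1 : PS W Finset.univ
      = ∑ p ∈ (Finset.univ ×ˢ Finset.univ : Finset (Fin k × Fin k)).filter
          (fun p => p.1 ≠ p.2), W s(p.1, p.2) := by
    unfold PS rowS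
    rw [Finset.sum_filter, Finset.sum_product]
    refine Finset.sum_congr rfl (fun u _ => ?_)
    rw [← Finset.sum_filter]
    refine Finset.sum_congr ?_ (fun x _ => rfl)
    ext x
    simp [Finset.mem_erase, ne_comm, eq_comm]
  rw [h1]
  have hmaps : ∀ p ∈ (Finset.univ ×ˢ Finset.univ : Finset (Fin k × Fin k)).filter
      (fun p => p.1 ≠ p.2), s(p.1, p.2) ∈ (⊤ : SimpleGraph (Fin k)).edgeFinset := by
    intro p hp
    have := (Finset.mem_filter.mp hp).2
    simp [SimpleGraph.mem_edgeFinset, this]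
  rw [← Finset.sum_fiberwise_of_maps_to hmaps (fun p => W s(p.1, p.2))]
  unfold totalWeight
  rw [Finset.mul_sum]
  refine Finset.sum_congr rfl (fun e he => ?_)
  induction e with
  | _ a b =>
    have hab : a ≠ b := by
      have := SimpleGraph.mem_edgeFinset.mp he
      rw [SimpleGraph.mem_edgeSet] at this
      exact this
    have hfiber : ((Finset.univ ×ˢ Finset.univ : Finset (Fin k × Fin k)).filter
        (fun p => p.1 ≠ p.2)).filter (fun p => s(p.1, p.2) = s(a, b)) = {(a, b), (b, a)} := by
      ext p
      obtain ⟨p1, p2⟩ := p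
      simp only [Finset.mem_filter, Finset.mem_product, Finset.mem_univ, true_and,
        Finset.mem_insert, Finset.mem_singleton, Sym2.eq_iff, Prod.mk.injEq]
      constructor
      · rintro ⟨h1, (⟨rfl, rfl⟩ | ⟨rfl, rfl⟩)⟩
        · left; exact ⟨rfl, rfl⟩
        · right; exact ⟨rfl, rfl⟩
      · rintro (⟨rfl, rfl⟩ | ⟨rfl, rfl⟩)
        · exact ⟨hab, Or.inl ⟨rfl, rfl⟩⟩
        · exact ⟨hab.symm, Or.inr ⟨rfl, rfl⟩⟩
    rw [hfiber]
    have hcard : ({(a, b), (b, a)} : Finset (Fin k × Fin k)).card = 2 := by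
      rw [Finset.card_insert_of_notMem (by simp [hab]), Finset.card_singleton]
    have : ∀ p ∈ ({(a, b), (b, a)} : Finset (Fin k × Fin k)), W s(p.1, p.2) = W s(a, b) := by
      intro p hp
      rcases Finset.mem_insert.mp hp with rfl | hp
      · rfl
      · rw [Finset.mem_singleton.mp hp]; simp [Sym2.eq_swap]
    rw [Finset.sum_congr rfl this, Finset.sum_const, hcard, smul_eq_mul]

lemma values3 {W : Sym2 (Fin k) → ℕ}
    (hW : ∀ e ∈ (⊤ : SimpleGraph (Fin k)).edgeFinset, W e = 0 ∨ W e = 2 ∨ W e = 3)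
    {v x : Fin k} (h : v ≠ x) : W s(v, x) = 0 ∨ W s(v, x) = 2 ∨ W s(v, x) = 3 :=
  hW _ (by simp [SimpleGraph.mem_edgeFinset, h])

lemma row_bound {W : Sym2 (Fin k) → ℕ}
    (hW : ∀ e ∈ (⊤ : SimpleGraph (Fin k)).edgeFinset, W e = 0 ∨ W e = 2 ∨ W e = 3)
    (S : Finset (Fin k)) (v : Fin k) :
    rowS W S v + 2 * zS W S v ≤ 2 * (S.erase v).card + dS W S v := by
  unfold rowS zS dS
  rw [Finset.card_filter, Finset.card_filter, Finset.mul_sum,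
    ← Finset.sum_add_distrib, Finset.card_eq_sum_ones (S.erase v), Finset.mul_sum,
    ← Finset.sum_add_distrib]
  refine Finset.sum_le_sum (fun x hx => ?_)
  have hvx : v ≠ x := fun h => (Finset.mem_erase.mp hx).1 h.symm
  rcases values3 hW hvx with h | h | h <;> simp [h]

lemma row_le {W : Sym2 (Fin k) → ℕ}
    (hW : ∀ e ∈ (⊤ : SimpleGraph (Fin k)).edgeFinset, W e = 0 ∨ W e = 2 ∨ W e = 3)
    (S : Finset (Fin k)) (v : Fin k) : rowS W S v ≤ 3 * (S.erase v).card := by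
  unfold rowS
  rw [Finset.card_eq_sum_ones, Finset.mul_sum]
  refine Finset.sum_le_sum (fun x hx => ?_)
  have hvx : v ≠ x := fun h => (Finset.mem_erase.mp hx).1 h.symm
  rcases values3 hW hvx with h | h | h <;> simp [h]

lemma arith_case1 (a r zu y1 y2 t1 t2 E m : ℤ)
    (ha : 0 ≤ a) (hr : 0 ≤ r) (hzu : 0 ≤ zu) (hy1 : 0 ≤ y1) (hy2 : 0 ≤ y2)
    (ht1 : 0 ≤ t1) (ht2 : 0 ≤ t2)
    (F1 : a + r + 1 = m) (F2 : a * (m+9) ≤ 4*E) (F3 : t1 + t2 = E)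
    (F4 : t1 ≤ y1 * a) (F5 : y1 ≤ zu) (F6 : 8*zu + m + 13 ≤ 4*a)
    (F7 : 8*t2 + y2*(m+5) ≤ y2*(4*a)) (F8 : y1 + y2 = r)
    (F11 : 17 ≤ m) (hcase : 2*a ≤ m) : False := by
  nlinarith [mul_nonneg (by linarith : (0:ℤ) ≤ r - y2) (by linarith : (0:ℤ) ≤ 4*a - m - 5),
    mul_nonneg ha (by linarith : (0:ℤ) ≤ 4*a - 8*zu - m - 13),
    mul_nonneg (by linarith : (0:ℤ) ≤ zu - y1) ha,
    mul_nonneg (by linarith : (0:ℤ) ≤ m - 2*a) (by linarith : (0:ℤ) ≤ m)]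

lemma arith_case2 (a r zu y1 y2 t1 t2 E m : ℤ)
    (ha : 0 ≤ a) (hr : 0 ≤ r) (hzu : 0 ≤ zu) (hy1 : 0 ≤ y1) (hy2 : 0 ≤ y2)
    (ht1 : 0 ≤ t1) (ht2 : 0 ≤ t2)
    (F1 : a + r + 1 = m) (F2 : a * (m+9) ≤ 4*E) (F3 : t1 + t2 = E)
    (F4 : t1 ≤ y1 * a) (F5 : y1 ≤ zu) (F6 : 8*zu + m + 13 ≤ 4*a)
    (F7 : 8*t2 + y2*(m+5) ≤ y2*(4*(r+1))) (F8 : y1 + y2 = r)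
    (F9 : m + 13 ≤ 4*(r+1))
    (F11 : 17 ≤ m) (hcase : r + 1 ≤ a) : False := by
  nlinarith [mul_nonneg (by linarith : (0:ℤ) ≤ r - y2) (by linarith : (0:ℤ) ≤ 4*(r+1) - m - 5),
    mul_nonneg ha (by linarith : (0:ℤ) ≤ 4*a - 8*zu - m - 13),
    mul_nonneg (by linarith : (0:ℤ) ≤ zu - y1) ha,
    mul_nonneg (by linarith : (0:ℤ) ≤ 4*r - m - 9) (by linarith : (0:ℤ) ≤ m - 2 - 2*r)]

lemma keyL {W : Sym2 (Fin k) → ℕ}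
    (hW : ∀ e ∈ (⊤ : SimpleGraph (Fin k)).edgeFinset, W e = 0 ∨ W e = 2 ∨ W e = 3)
    (hstar : StarCond W) (S : Finset (Fin k)) (hm : 17 ≤ S.card) :
    ∃ v ∈ S, 4 * dS W S v ≤ 8 * zS W S v + S.card + 12 := by
  classical
  by_contra hcon
  push_neg at hcon
  have hass : ∀ v ∈ S, 8 * zS W S v + S.card + 13 ≤ 4 * dS W S v := by
    intro v hv
    have := hcon v hv
    omega
  obtain ⟨u, huS, humax⟩ := S.exists_max_image (dS W S)
    (Finset.card_pos.mp (by omega))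
  set N := (S.erase u).filter (fun x => W s(u, x) = 3) with hN
  set R := (S.erase u) \ N with hR
  have hNsub : N ⊆ S.erase u := Finset.filter_subset _ _
  have hdSu : dS W S u = N.card := by rw [hN]; rfl
  have hcard1 : (S.erase u).card + 1 = S.card := Finset.card_erase_add_one huS
  have hcardNR : N.card + R.card + 1 = S.card := by
    rw [hR, Finset.card_sdiff_of_subset hNsub]
    have := Finset.card_le_card hNsub
    omega
  -- membership helpers
  have hNS : ∀ x ∈ N, x ∈ S := fun x hx => (Finset.mem_erase.mp (hNsub hx)).2
  have hNu : ∀ x ∈ N, x ≠ u := fun x hx => (Finset.mem_erase.mp (hNsub hx)).1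
  have hN3 : ∀ x ∈ N, W s(u, x) = 3 := fun x hx => (Finset.mem_filter.mp hx).2
  have hRS : ∀ y ∈ R, y ∈ S := fun y hy =>
    (Finset.mem_erase.mp (Finset.mem_sdiff.mp hy).1).2
  have hRu : ∀ y ∈ R, y ≠ u := fun y hy =>
    (Finset.mem_erase.mp (Finset.mem_sdiff.mp hy).1).1
  have hRN : ∀ y ∈ R, y ∉ N := fun y hy => (Finset.mem_sdiff.mp hy).2
  -- independence of N
  have hindep : ∀ x ∈ N, ∀ y ∈ N, x ≠ y → W s(x, y) ≠ 3 := by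
    intro x hx y hy hxy h3
    exact hstar.1 u x y (Ne.symm (hNu x hx)) hxy (Ne.symm (hNu y hy))
      (hN3 x hx) h3 (by rw [Sym2.eq_swap]; exact hN3 y hy)
  -- degree bound inside N
  have hdegN : ∀ x ∈ N, dS W S x ≤ R.card + 1 := by
    intro x hx
    have hsub : (S.erase x).filter (fun y => W s(x, y) = 3) ⊆ insert u R := by
      intro y hy
      obtain ⟨hy1, h3⟩ := Finset.mem_filter.mp hy
      obtain ⟨hyx, hyS⟩ := Finset.mem_erase.mp hy1
      by_cases hyu : y = u
      · simp [hyu]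
      · have hyN : y ∉ N := fun hyN => hindep x hx y hyN (Ne.symm hyx) h3
        exact Finset.mem_insert_of_mem (Finset.mem_sdiff.mpr
          ⟨Finset.mem_erase.mpr ⟨hyu, hyS⟩, hyN⟩)
    calc dS W S x ≤ (insert u R).card := Finset.card_le_card hsub
    _ ≤ R.card + 1 := Finset.card_insert_le _ _
  -- lower bound on cross degrees
  have hcR : ∀ x ∈ N, S.card + 9 ≤ 4 * (R.filter (fun y => W s(x, y) = 3)).card := by
    intro x hx
    have hsub : (S.erase x).filter (fun y => W s(x, y) = 3)
        ⊆ insert u (R.filter (fun y => W s(x, y) = 3)) := by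
      intro y hy
      obtain ⟨hy1, h3⟩ := Finset.mem_filter.mp hy
      obtain ⟨hyx, hyS⟩ := Finset.mem_erase.mp hy1
      by_cases hyu : y = u
      · simp [hyu]
      · have hyN : y ∉ N := fun hyN => hindep x hx y hyN (Ne.symm hyx) h3
        exact Finset.mem_insert_of_mem (Finset.mem_filter.mpr
          ⟨Finset.mem_sdiff.mpr ⟨Finset.mem_erase.mpr ⟨hyu, hyS⟩, hyN⟩, h3⟩)
    have h1 : dS W S x ≤ (R.filter (fun y => W s(x, y) = 3)).card + 1 :=
      le_trans (Finset.card_le_card hsub) (Finset.card_insert_le _ _)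
    have h2 := hass x (hNS x hx)
    omega
  set E := ∑ x ∈ N, (R.filter (fun y => W s(x, y) = 3)).card with hE
  have hElow : N.card * (S.card + 9) ≤ 4 * E := by
    calc N.card * (S.card + 9) = N.card • (S.card + 9) := (smul_eq_mul ..).symm
    _ ≤ ∑ x ∈ N, 4 * (R.filter (fun y => W s(x, y) = 3)).card :=
        Finset.card_nsmul_le_sum _ _ _ hcR
    _ = 4 * E := by rw [hE, Finset.mul_sum]
  set tN := fun y => (N.filter (fun x => W s(x, y) = 3)).card with htN
  have hEsum : E = ∑ y ∈ R, tN y := by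
    rw [hE, htN]
    simp_rw [Finset.card_filter]
    exact Finset.sum_comm
  set Y1 := R.filter (fun y => W s(u, y) = 0) with hY1
  set Y2 := R.filter (fun y => ¬ W s(u, y) = 0) with hY2
  have hy12 : Y1.card + Y2.card = R.card := by
    rw [hY1, hY2]
    exact Finset.card_filter_add_card_filter_not _
  have hsplit : ∑ y ∈ Y1, tN y + ∑ y ∈ Y2, tN y = E := by
    rw [hEsum, hY1, hY2]
    exact Finset.sum_filter_add_sum_filter_not _ _ _
  have hY1z : Y1.card ≤ zS W S u := by
    apply Finset.card_le_card
    intro y hy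
    obtain ⟨hyR, hy0⟩ := Finset.mem_filter.mp hy
    exact Finset.mem_filter.mpr ⟨(Finset.mem_sdiff.mp hyR).1, hy0⟩
  have ht1 : ∑ y ∈ Y1, tN y ≤ Y1.card * N.card := by
    calc ∑ y ∈ Y1, tN y ≤ Y1.card • N.card :=
      Finset.sum_le_card_nsmul _ _ _ (fun y _ => Finset.card_filter_le _ _)
    _ = Y1.card * N.card := smul_eq_mul ..
  set M := min N.card (R.card + 1) with hM
  have hM13 : S.card + 13 ≤ 4 * M := by
    have hNne : N.Nonempty := by
      rw [← Finset.card_pos]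
      have := hass u huS
      omega
    obtain ⟨x₀, hx₀⟩ := hNne
    have h1 := hass x₀ (hNS x₀ hx₀)
    have h2 := humax x₀ (hNS x₀ hx₀)
    have h3 := hdegN x₀ hx₀
    omega
  have hY2t : ∀ y ∈ Y2, 8 * tN y + (S.card + 5) ≤ 4 * M := by
    intro y hy
    obtain ⟨hyR, hyne0⟩ := Finset.mem_filter.mp hy
    by_cases ht0 : tN y = 0
    · omega
    · have hTne : (N.filter (fun x => W s(x, y) = 3)).Nonempty := by
        rw [← Finset.card_pos]
        have : tN y = (N.filter (fun x => W s(x, y) = 3)).card := by rw [htN]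
        omega
      obtain ⟨x₀, hx₀T⟩ := hTne
      obtain ⟨hx₀N, hx₀3⟩ := Finset.mem_filter.mp hx₀T
      have hzx₀ : tN y ≤ zS W S x₀ + 1 := by
        have hsub : (N.filter (fun x => W s(x, y) = 3)).erase x₀
            ⊆ (S.erase x₀).filter (fun x' => W s(x₀, x') = 0) := by
          intro x' hx'
          obtain ⟨hx'ne, hx'T⟩ := Finset.mem_erase.mp hx'
          obtain ⟨hx'N, hx'3⟩ := Finset.mem_filter.mp hx'T
          have hyN : y ∉ N := hRN y hyR
          have hzero : W s(x₀, x') = 0 := by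
            rcases hstar.2 u x₀ y x'
              (Ne.symm (hNu x₀ hx₀N))
              (Ne.symm (hRu y hyR))
              (Ne.symm (hNu x' hx'N))
              (fun h => hyN (h ▸ hx₀N))
              (Ne.symm hx'ne)
              (fun h => hyN (h ▸ hx'N))
              (hN3 x₀ hx₀N) hx₀3
              (by rw [Sym2.eq_swap]; exact hx'3)
              (by rw [Sym2.eq_swap]; exact hN3 x' hx'N) with h | h
            · exact absurd h hyne0
            · exact h
          exact Finset.mem_filter.mpr
            ⟨Finset.mem_erase.mpr ⟨hx'ne, hNS x' hx'N⟩, hzero⟩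
        have hc := Finset.card_le_card hsub
        rw [Finset.card_erase_of_mem hx₀T] at hc
        have ht : tN y = (N.filter (fun x => W s(x, y) = 3)).card := by rw [htN]
        have hz : zS W S x₀ = ((S.erase x₀).filter (fun x' => W s(x₀, x') = 0)).card := rfl
        omega
      have h1 := hass x₀ (hNS x₀ hx₀N)
      have h2 := humax x₀ (hNS x₀ hx₀N)
      have h3 := hdegN x₀ hx₀N
      omega
  have ht2 : 8 * (∑ y ∈ Y2, tN y) + Y2.card * (S.card + 5) ≤ Y2.card * (4 * M) := by
    have h := Finset.sum_le_sum hY2t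
    rw [Finset.sum_add_distrib, Finset.sum_const, Finset.sum_const, smul_eq_mul ..,
      smul_eq_mul .., ← Finset.mul_sum] at h
    exact h
  have hzu : 8 * zS W S u + S.card + 13 ≤ 4 * N.card := hdSu ▸ hass u huS
  -- integer versions
  have F1 : (N.card : ℤ) + R.card + 1 = (S.card : ℤ) := by exact_mod_cast hcardNR
  have F2 : (N.card : ℤ) * ((S.card : ℤ) + 9) ≤ 4 * (E : ℤ) := by exact_mod_cast hElow
  have F3 : ((∑ y ∈ Y1, tN y : ℕ) : ℤ) + ((∑ y ∈ Y2, tN y : ℕ) : ℤ) = (E : ℤ) := by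
    exact_mod_cast hsplit
  have F4 : ((∑ y ∈ Y1, tN y : ℕ) : ℤ) ≤ (Y1.card : ℤ) * (N.card : ℤ) := by
    exact_mod_cast ht1
  have F5 : (Y1.card : ℤ) ≤ (zS W S u : ℤ) := by exact_mod_cast hY1z
  have F6 : 8 * (zS W S u : ℤ) + (S.card : ℤ) + 13 ≤ 4 * (N.card : ℤ) := by
    exact_mod_cast hzu
  have F8 : (Y1.card : ℤ) + (Y2.card : ℤ) = (R.card : ℤ) := by exact_mod_cast hy12
  have F11 : (17 : ℤ) ≤ (S.card : ℤ) := by exact_mod_cast hm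
  have F9 : (S.card : ℤ) + 13 ≤ 4 * ((M : ℕ) : ℤ) := by exact_mod_cast hM13
  have F7 : 8 * ((∑ y ∈ Y2, tN y : ℕ) : ℤ) + (Y2.card : ℤ) * ((S.card : ℤ) + 5)
      ≤ (Y2.card : ℤ) * (4 * ((M : ℕ) : ℤ)) := by exact_mod_cast ht2
  rcases le_total N.card (R.card + 1) with hc | hc
  · have hMa : ((M : ℕ) : ℤ) = (N.card : ℤ) := by
      have : M = N.card := by rw [hM]; omega
      exact_mod_cast this
    rw [hMa] at F7
    exact arith_case1 _ _ _ _ _ _ _ _ _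
      (Int.natCast_nonneg _) (Int.natCast_nonneg _) (Int.natCast_nonneg _)
      (Int.natCast_nonneg _) (Int.natCast_nonneg _) (Int.natCast_nonneg _)
      (Int.natCast_nonneg _)
      F1 F2 F3 F4 F5 F6 F7 F8 F11
      (by have : 2 * N.card ≤ S.card := by omega
          exact_mod_cast this)
  · have hMa : ((M : ℕ) : ℤ) = (R.card : ℤ) + 1 := by
      have : M = R.card + 1 := by rw [hM]; omega
      exact_mod_cast this
    rw [hMa] at F7 F9
    exact arith_case2 _ _ _ _ _ _ _ _ _
      (Int.natCast_nonneg _) (Int.natCast_nonneg _) (Int.natCast_nonneg _)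
      (Int.natCast_nonneg _) (Int.natCast_nonneg _) (Int.natCast_nonneg _)
      (Int.natCast_nonneg _)
      F1 F2 F3 F4 F5 F6 F7 F8 F9 F11
      (by exact_mod_cast hc)

lemma PS_bound {W : Sym2 (Fin k) → ℕ}
    (hW : ∀ e ∈ (⊤ : SimpleGraph (Fin k)).edgeFinset, W e = 0 ∨ W e = 2 ∨ W e = 3)
    (hstar : StarCond W) :
    ∀ n : ℕ, ∀ S : Finset (Fin k), S.card = n →
      4 * PS W S ≤ 9 * S.card * S.card + 100 * S.card := by
  intro n
  induction n using Nat.strong_induction_on with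
  | _ n ih =>
    intro S hS
    by_cases hsmall : S.card ≤ 33
    · have hrow : ∀ u ∈ S, rowS W S u ≤ 3 * S.card := by
        intro u hu
        calc rowS W S u ≤ 3 * (S.erase u).card := row_le hW S u
        _ ≤ 3 * S.card := by
            have := Finset.card_le_card (Finset.erase_subset u S)
            omega
      have hPS : PS W S ≤ S.card * (3 * S.card) := by
        calc PS W S ≤ S.card • (3 * S.card) := Finset.sum_le_card_nsmul _ _ _ hrow
        _ = S.card * (3 * S.card) := smul_eq_mul ..
      have hprod : (3 * S.card) * S.card ≤ 100 * S.card :=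
        Nat.mul_le_mul_right _ (by omega)
      nlinarith [hPS, hprod]
    · have h17 : 17 ≤ S.card := by omega
      obtain ⟨v, hvS, hkey⟩ := keyL hW hstar S h17
      have hrec := PS_erase W hvS
      have hd : (S.erase v).card + 1 = S.card := Finset.card_erase_add_one hvS
      have hih := ih (S.erase v).card (by omega) (S.erase v) rfl
      have hrow := row_bound hW S v
      set d := (S.erase v).card with hdd
      have hrow4 : 4 * rowS W S v ≤ 9 * d + 21 := by omega
      have hgoal : 9 * S.card * S.card + 100 * S.card
          = 9 * d * d + 118 * d + 109 := by
        have : S.card = d + 1 := by omega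
        rw [this]; ring
      rw [hgoal]
      omega

def Wc (k a : ℕ) : Sym2 (Fin k) → ℕ := Sym2.lift
  ⟨fun u v => if u.val < a then (if v.val < a then 0 else 3)
    else (if v.val < a then 3 else 2),
   by intro u v; by_cases hu : u.val < a <;> by_cases hv : v.val < a <;> simp [hu, hv]⟩

lemma Wc_mk (k a : ℕ) (u v : Fin k) :
    Wc k a s(u, v) = if u.val < a then (if v.val < a then 0 else 3)
      else (if v.val < a then 3 else 2) := rfl

lemma Wc_values (k a : ℕ) :
    ∀ e ∈ (⊤ : SimpleGraph (Fin k)).edgeFinset,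
      Wc k a e = 0 ∨ Wc k a e = 2 ∨ Wc k a e = 3 := by
  intro e _
  induction e with
  | _ u v =>
    rw [Wc_mk]
    by_cases hu : u.val < a <;> by_cases hv : v.val < a <;> simp [hu, hv]

lemma Wc_star (k a : ℕ) : StarCond (Wc k a) := by
  constructor
  · intro u v x _ _ _ h1 h2 h3
    rw [Wc_mk] at h1 h2 h3
    by_cases hu : u.val < a <;> by_cases hv : v.val < a <;> by_cases hx : x.val < a <;>
      simp [hu, hv, hx] at h1 h2 h3
  · intro u v x y _ _ _ _ _ _ h1 h2 h3 h4
    rw [Wc_mk] at h1 h2 h3 h4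
    by_cases hu : u.val < a <;> by_cases hv : v.val < a <;> by_cases hx : x.val < a <;>
      by_cases hy : y.val < a <;> simp [Wc_mk, hu, hv, hx, hy] at h1 h2 h3 h4 ⊢

lemma arith_constr (q s ca cb ecb km1 PSv : ℤ) (hq : 1 ≤ q) (hs0 : 0 ≤ s) (hs3 : s ≤ 3)
    (hca : ca = q) (hsum : ca + cb = 4*q + s) (hecb : ecb + 1 = cb)
    (hkm1 : km1 + 1 = 4*q + s)
    (hPS : ca * (3*cb) + cb * (3*ca + 2*ecb) ≤ PSv) :
    9 * ((4*q+s) * km1) ≤ 4 * PSv := by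
  nlinarith [mul_nonneg hs0 (by linarith : (0:ℤ) ≤ 3 - s)]

lemma Wc_weight (k : ℕ) (hk : 4 ≤ k) :
    9 * (k * (k-1)) ≤ 8 * totalWeight (Wc k (k/4)) := by
  classical
  set a := k / 4 with hadef
  set A := (Finset.univ : Finset (Fin k)).filter (fun x => x.val < a) with hA
  set B := (Finset.univ : Finset (Fin k)).filter (fun x => ¬ x.val < a) with hB
  have hak : a ≤ k := Nat.div_le_self _ _
  have hcaA : A.card = a := by
    rw [hA, Finset.card_filter]
    rw [Fin.sum_univ_eq_sum_range (fun i => if i < a then 1 else 0)]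
    rw [← Finset.card_filter]
    have : (Finset.range k).filter (fun i => i < a) = Finset.range a := by
      ext i
      simp only [Finset.mem_filter, Finset.mem_range]
      omega
    rw [this, Finset.card_range]
  have hcab : A.card + B.card = k := by
    rw [hA, hB]
    have := Finset.card_filter_add_card_filter_not
      (s := (Finset.univ : Finset (Fin k))) (p := fun x : Fin k => x.val < a)
    simpa using this
  -- rows
  have hrowA : ∀ v ∈ A, rowS (Wc k a) Finset.univ v = 3 * B.card := by
    intro v hv
    have hva : v.val < a := (Finset.mem_filter.mp hv).2
    unfold rowS
    rw [← Finset.sum_filter_add_sum_filter_not (Finset.univ.erase v) (fun x => x.val < a)]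
    have h0 : ∑ x ∈ (Finset.univ.erase v).filter (fun x => x.val < a), Wc k a s(v, x) = 0 := by
      apply Finset.sum_eq_zero
      intro x hx
      have := (Finset.mem_filter.mp hx).2
      rw [Wc_mk]
      simp [hva, this]
    have h3 : ∑ x ∈ (Finset.univ.erase v).filter (fun x => ¬ x.val < a), Wc k a s(v, x)
        = 3 * B.card := by
      have hc : ((Finset.univ.erase v).filter (fun x => ¬ x.val < a)).card = B.card := by
        rw [Finset.filter_erase, ← hB, Finset.erase_eq_of_notMem (by simp [hB, hva])]
      rw [Finset.sum_congr rfl (fun x hx => ?_), Finset.sum_const, hc, smul_eq_mul, mul_comm]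
      have := (Finset.mem_filter.mp hx).2
      rw [Wc_mk]
      simp [hva, this]
    rw [h0, h3, zero_add]
  have hrowB : ∀ v ∈ B, rowS (Wc k a) Finset.univ v = 3 * A.card + 2 * (B.erase v).card := by
    intro v hv
    have hva : ¬ v.val < a := (Finset.mem_filter.mp hv).2
    unfold rowS
    rw [← Finset.sum_filter_add_sum_filter_not (Finset.univ.erase v) (fun x => x.val < a)]
    have h3 : ∑ x ∈ (Finset.univ.erase v).filter (fun x => x.val < a), Wc k a s(v, x)
        = 3 * A.card := by
      have hc : ((Finset.univ.erase v).filter (fun x => x.val < a)).card = A.card := by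
        rw [Finset.filter_erase, ← hA, Finset.erase_eq_of_notMem (by simp [hA, hva])]
      rw [Finset.sum_congr rfl (fun x hx => ?_), Finset.sum_const, hc, smul_eq_mul, mul_comm]
      have := (Finset.mem_filter.mp hx).2
      rw [Wc_mk]
      simp [hva, this]
    have h2 : ∑ x ∈ (Finset.univ.erase v).filter (fun x => ¬ x.val < a), Wc k a s(v, x)
        = 2 * (B.erase v).card := by
      have hc : ((Finset.univ.erase v).filter (fun x => ¬ x.val < a)).card
          = (B.erase v).card := by
        rw [Finset.filter_erase, ← hB]
      rw [Finset.sum_congr rfl (fun x hx => ?_), Finset.sum_const, hc, smul_eq_mul, mul_comm]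
      have := (Finset.mem_filter.mp hx).2
      rw [Wc_mk]
      simp [hva, this]
    rw [h3, h2]
  -- PS lower bound
  have hBne : 1 ≤ B.card := by omega
  have hPSsplit : PS (Wc k a) Finset.univ
      = ∑ v ∈ A, rowS (Wc k a) Finset.univ v + ∑ v ∈ B, rowS (Wc k a) Finset.univ v := by
    unfold PS
    rw [hA, hB]
    exact (Finset.sum_filter_add_sum_filter_not _ _ _).symm
  have hsumA : ∑ v ∈ A, rowS (Wc k a) Finset.univ v = A.card * (3 * B.card) := by
    rw [Finset.sum_congr rfl hrowA, Finset.sum_const, smul_eq_mul]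
  have hsumB : ∑ v ∈ B, rowS (Wc k a) Finset.univ v
      = B.card * (3 * A.card + 2 * (B.card - 1)) := by
    rw [Finset.sum_congr rfl (fun v hv => ?_), Finset.sum_const, smul_eq_mul]
    rw [hrowB v hv, Finset.card_erase_of_mem hv]
  have hhs := handshake (Wc k a)
  -- final arithmetic
  have hq1 : 1 ≤ k / 4 := by omega
  have hmod : k = 4 * (k/4) + k % 4 := by omega
  have hint : 9 * (((k:ℤ)) * ((k:ℤ) - 1)) ≤ 4 * (PS (Wc k a) Finset.univ : ℤ) := by
    have e1 : ((k - 1 : ℕ) : ℤ) = (k : ℤ) - 1 := by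
      have : (1:ℕ) ≤ k := by omega
      push_cast [Nat.cast_sub this]
      ring
    have hPSz : (A.card : ℤ) * (3 * (B.card : ℤ))
        + (B.card : ℤ) * (3 * (A.card : ℤ) + 2 * ((B.card : ℤ) - 1))
        ≤ (PS (Wc k a) Finset.univ : ℤ) := by
      rw [hPSsplit]
      push_cast [hsumA, hsumB]
      have e2 : ((B.card - 1 : ℕ) : ℤ) = (B.card : ℤ) - 1 := by
        push_cast [Nat.cast_sub hBne]
        ring
      rw [e2]
    have hkz : ((k:ℤ)) = 4 * ((k/4 : ℕ) : ℤ) + ((k % 4 : ℕ) : ℤ) := by exact_mod_cast hmod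
    have := arith_constr ((k/4 : ℕ) : ℤ) ((k % 4 : ℕ) : ℤ) (A.card : ℤ) (B.card : ℤ)
      ((B.card : ℤ) - 1) ((k:ℤ) - 1) (PS (Wc k a) Finset.univ : ℤ)
      (by exact_mod_cast hq1) (by positivity) (by exact_mod_cast (by omega : k % 4 ≤ 3))
      (by exact_mod_cast hcaA) (by rw [← hkz]; exact_mod_cast hcab) (by ring)
      (by rw [← hkz]; ring) hPSz
    calc 9 * ((k:ℤ) * ((k:ℤ) - 1)) = 9 * ((4 * ((k/4:ℕ):ℤ) + ((k%4:ℕ):ℤ)) * ((k:ℤ)-1)) := by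
          rw [← hkz]
    _ ≤ 4 * (PS (Wc k a) Finset.univ : ℤ) := this
  have : 9 * ((k:ℤ) * ((k:ℤ) - 1)) ≤ 8 * (totalWeight (Wc k a) : ℤ) := by
    rw [show (8 : ℤ) * (totalWeight (Wc k a) : ℤ) = 4 * ((2 * totalWeight (Wc k a) : ℕ) : ℤ)
      by push_cast; ring, ← hhs]
    exact hint
  have e1 : ((k - 1 : ℕ) : ℤ) = (k : ℤ) - 1 := by
    have h1 : (1:ℕ) ≤ k := by omega
    push_cast [Nat.cast_sub h1]
    ring
  exact_mod_cast (by rw [← e1] at this; exact_mod_cast this : (9 * (k * (k-1) : ℕ) : ℤ) ≤ (8 * totalWeight (Wc k a) : ℕ))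

end StarAux

/-- Every `{0,2,3}`-weighting of `K_k` satisfying Condition (⋆) has total weight at most
`(9/4 + o(1))·C(k,2)`, and this is asymptotically sharp. -/
theorem star_weight_bound :
    ∀ ε : ℝ, 0 < ε → ∃ k₀ : ℕ,
      (∀ k ≥ k₀, ∀ W : Sym2 (Fin k) → ℕ,
        (∀ e ∈ (⊤ : SimpleGraph (Fin k)).edgeFinset, W e = 0 ∨ W e = 2 ∨ W e = 3) →
        StarCond W →
        (totalWeight W : ℝ) ≤ (9 / 4 + ε) * (k.choose 2 : ℝ)) ∧
      (∀ k ≥ k₀, ∃ W : Sym2 (Fin k) → ℕ,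
        (∀ e ∈ (⊤ : SimpleGraph (Fin k)).edgeFinset, W e = 0 ∨ W e = 2 ∨ W e = 3) ∧
        StarCond W ∧
        (9 / 4 - ε) * (k.choose 2 : ℝ) ≤ (totalWeight W : ℝ)) := by
  intro ε hε
  refine ⟨⌈(28:ℝ)/ε⌉₊ + 5, ?_, ?_⟩
  · intro k hk W hW hstar
    have hk5 : 5 ≤ k := by omega
    have hbound := StarAux.PS_bound hW hstar ((Finset.univ : Finset (Fin k)).card)
      Finset.univ rfl
    have hhs := StarAux.handshake W
    have hcard : (Finset.univ : Finset (Fin k)).card = k := by simp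
    rw [hcard] at hbound
    have h8 : 8 * totalWeight W ≤ 9 * k * k + 100 * k := by omega
    have hchoose : 2 * (k.choose 2) = k * (k - 1) := by
      rcases k with _ | m
      · simp
      · rw [Nat.choose_two_right, Nat.succ_sub_one,
          Nat.mul_div_cancel' (by rw [mul_comm]; exact (Nat.even_mul_succ_self m).two_dvd)]
    have hk1 : (1:ℕ) ≤ k := by omega
    have hkc : 2 * ((k.choose 2 : ℕ) : ℝ) = (k:ℝ) * ((k:ℝ) - 1) := by
      have := hchoose
      have e1 : ((k - 1 : ℕ) : ℝ) = (k : ℝ) - 1 := by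
        push_cast [Nat.cast_sub hk1]; ring
      calc 2 * ((k.choose 2 : ℕ) : ℝ) = ((2 * k.choose 2 : ℕ) : ℝ) := by push_cast; ring
      _ = ((k * (k-1) : ℕ) : ℝ) := by rw [this]
      _ = (k:ℝ) * ((k:ℝ) - 1) := by push_cast [e1]; ring
    have h8R : 8 * (totalWeight W : ℝ) ≤ 9 * (k:ℝ) * (k:ℝ) + 100 * (k:ℝ) := by
      calc 8 * (totalWeight W : ℝ) = ((8 * totalWeight W : ℕ) : ℝ) := by push_cast; ring
      _ ≤ ((9 * k * k + 100 * k : ℕ) : ℝ) := by exact_mod_cast h8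
      _ = 9 * (k:ℝ) * (k:ℝ) + 100 * (k:ℝ) := by push_cast; ring
    have hKb : (28:ℝ)/ε ≤ (k:ℝ) - 1 := by
      have h1 : ((⌈(28:ℝ)/ε⌉₊ + 5 : ℕ) : ℝ) ≤ (k:ℝ) := by exact_mod_cast hk
      have h2 := Nat.le_ceil ((28:ℝ)/ε)
      push_cast at h1
      linarith
    have hεK : (28:ℝ) ≤ ε * ((k:ℝ) - 1) := by
      rw [div_le_iff₀ hε] at hKb
      linarith [hKb]
    have hK0 : (0:ℝ) ≤ (k:ℝ) := by positivity
    nlinarith [mul_nonneg (by linarith : (0:ℝ) ≤ ε * ((k:ℝ)-1) - 28) hK0, hkc, h8R]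
  · intro k hk
    have hk4 : 4 ≤ k := by omega
    refine ⟨StarAux.Wc k (k/4), StarAux.Wc_values k (k/4), StarAux.Wc_star k (k/4), ?_⟩
    have h9 := StarAux.Wc_weight k hk4
    have hk1 : (1:ℕ) ≤ k := by omega
    have e1 : ((k - 1 : ℕ) : ℝ) = (k : ℝ) - 1 := by
      push_cast [Nat.cast_sub hk1]; ring
    have h9R : 9 * ((k:ℝ) * ((k:ℝ) - 1)) ≤ 8 * (totalWeight (StarAux.Wc k (k/4)) : ℝ) := by
      calc 9 * ((k:ℝ) * ((k:ℝ) - 1)) = ((9 * (k * (k-1)) : ℕ) : ℝ) := by push_cast [e1]; ring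
      _ ≤ ((8 * totalWeight (StarAux.Wc k (k/4)) : ℕ) : ℝ) := by exact_mod_cast h9
      _ = 8 * (totalWeight (StarAux.Wc k (k/4)) : ℝ) := by push_cast; ring
    have hchoose : 2 * (k.choose 2) = k * (k - 1) := by
      rcases k with _ | m
      · simp
      · rw [Nat.choose_two_right, Nat.succ_sub_one,
          Nat.mul_div_cancel' (by rw [mul_comm]; exact (Nat.even_mul_succ_self m).two_dvd)]
    have hkc : 2 * ((k.choose 2 : ℕ) : ℝ) = (k:ℝ) * ((k:ℝ) - 1) := by
      calc 2 * ((k.choose 2 : ℕ) : ℝ) = ((2 * k.choose 2 : ℕ) : ℝ) := by push_cast; ring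
      _ = ((k * (k-1) : ℕ) : ℝ) := by rw [hchoose]
      _ = (k:ℝ) * ((k:ℝ) - 1) := by push_cast [e1]; ring
    have hkcpos : (0:ℝ) ≤ ((k.choose 2 : ℕ) : ℝ) := by positivity
    nlinarith [hkc, h9R, hkcpos, mul_nonneg (le_of_lt hε) hkcpos]
end

section
/- Let T be a tree with radius r, and let D⃗ be a directed graph on vertex set V. Suppose V is partitioned into nonempty sets V₁, ..., V_t defined by: V_{i+1} is the set of vertices with in-degree less than |V(T)| in D⃗ restricted to V \ (V₁ ∪ ... ∪ V_i). If D⃗ does not contain a copy of T⃗ (the orientation of T with all edges directed toward a fixed center), then t ≤ r, i.e., the partition process terminates in at most r rounds. -/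
/-!
Suppose `r < t` and pick `v` in the peeled set `V_{r+1}`. A vertex surviving round `k + 1` has at
least `|V(T)|` in-neighbours among the vertices surviving round `k`, so `T⃗` embeds greedily: send
the center to `v` and a vertex at distance `d` from the center into the survivors of round
`r - d`, placing vertices in order of distance; the in-neighbourhood of the image of a vertex's
parent always contains a vertex not used yet.
-/

open Finset

namespace SimpleGraph

variable {α : Type*} {G : SimpleGraph α}

theorem Connected.exists_adj_dist_add_one_eq (hG : G.Connected) {u c : α} (hu : u ≠ c) :
    ∃ p, G.Adj u p ∧ G.dist p c + 1 = G.dist u c := by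
  obtain ⟨q, hq⟩ := hG.exists_walk_length_eq_dist u c
  have hnil : ¬q.Nil := fun h => hu h.eq
  have hadj := q.adj_snd hnil
  refine ⟨q.snd, hadj, ?_⟩
  have hle : G.dist q.snd c ≤ q.tail.length := dist_le q.tail
  have htail := q.length_tail_add_one hnil
  have hdiff := hadj.symm.diff_dist_adj (u := c)
  rw [dist_comm, dist_comm (u := c)] at hdiff
  omega

theorem IsTree.eq_of_adj_of_dist_lt (hG : G.IsTree) {u w₁ w₂ c : α}
    (h₁ : G.Adj u w₁) (h₂ : G.Adj u w₂)
    (hd₁ : G.dist w₁ c < G.dist u c) (hd₂ : G.dist w₂ c < G.dist u c) : w₁ = w₂ := by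
  have shortest_path {w : α} (h : G.Adj u w) (hd : G.dist w c < G.dist u c) :
      ∃ q : G.Walk w c, (Walk.cons h q).IsPath := by
    obtain ⟨q, hq⟩ := hG.connected.exists_walk_length_eq_dist w c
    refine ⟨q, (Walk.cons h q).isPath_of_length_eq_dist ?_⟩
    have := hG.dist_eq_dist_add_one_of_adj c h
    rw [dist_comm (u := c), dist_comm (u := c)] at this
    simp only [Walk.length_cons]
    omega
  obtain ⟨q₁, hq₁⟩ := shortest_path h₁ hd₁
  obtain ⟨q₂, hq₂⟩ := shortest_path h₂ hd₂
  have := congrArg (fun q : G.Path u c => q.1.snd)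
    ((hG.isAcyclic.subsingleton_path u c).elim ⟨_, hq₁⟩ ⟨_, hq₂⟩)
  simpa using this

end SimpleGraph

section LayeredEmbedding

variable {α V : Type*} (D : V → V → Prop) [DecidableRel D]
  (S : ℕ → Finset V) (c : α) (p : α → α) (ℓ : α → ℕ)

structure IsLayeredEmbedding (A : Finset α) (φ : α → V) : Prop where
  injOn : Set.InjOn φ A
  mem_layer : ∀ a ∈ A, φ a ∈ S (ℓ a)
  arc : ∀ a ∈ A, a ≠ c → D (φ a) (φ (p a))

variable {D S c p ℓ}

theorem IsLayeredEmbedding.exists_insert [DecidableEq α] [DecidableEq V] {A : Finset α} {φ : α → V}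
    (hφ : IsLayeredEmbedding D S c p ℓ A φ) (hA : ∀ a ∈ A, a ≠ c → p a ∈ A)
    {u : α} (hu : u ∉ A) (hpu : p u ∈ A)
    (hdeg : #A < #{x ∈ S (ℓ u) | D x (φ (p u))}) :
    ∃ ψ, IsLayeredEmbedding D S c p ℓ (insert u A) ψ := by
  obtain ⟨w, hw, hwφ⟩ := exists_mem_notMem_of_card_lt_card
    (card_image_le (s := A) (f := φ) |>.trans_lt hdeg)
  rw [mem_filter] at hw
  rw [mem_image, not_exists] at hwφ
  set ψ := Function.update φ u w
  have hψA : ∀ a ∈ A, ψ a = φ a := fun a ha =>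
    Function.update_of_ne (ne_of_mem_of_not_mem ha hu) w φ
  have hψu : ψ u = w := Function.update_self u w φ
  refine ⟨ψ, ?_, ?_, ?_⟩
  · rw [coe_insert, Set.injOn_insert (mod_cast hu)]
    refine ⟨hφ.injOn.congr fun a ha => (hψA a ha).symm, ?_⟩
    rintro ⟨a, ha, hau⟩
    rw [hψA a ha, hψu] at hau
    exact hwφ a ⟨ha, hau⟩
  · intro a ha
    rcases mem_insert.mp ha with rfl | ha
    · exact hψu ▸ hw.1
    · exact hψA a ha ▸ hφ.mem_layer a ha
  · intro a ha hac
    rcases mem_insert.mp ha with rfl | ha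
    · rw [hψu, hψA _ hpu]
      exact hw.2
    · rw [hψA a ha, hψA _ (hA a ha hac)]
      exact hφ.arc a ha hac

theorem exists_isLayeredEmbedding_univ [Fintype α]
    (hp : ∀ a ≠ c, ℓ (p a) = ℓ a + 1)
    (hS : ∀ a ≠ c, ∀ w ∈ S (ℓ a + 1), Fintype.card α ≤ #{x ∈ S (ℓ a) | D x w})
    {v : V} (hv : v ∈ S (ℓ c)) :
    ∃ φ, IsLayeredEmbedding D S c p ℓ univ φ := by
  classical
  suffices ∀ A : Finset α, c ∈ A → (∀ a ∈ A, a ≠ c → p a ∈ A) →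
      ∃ φ, IsLayeredEmbedding D S c p ℓ A φ from this univ (mem_univ c) (by simp)
  intro A
  induction A using Finset.strongInduction with
  | H A ih =>
  intro hcA hA
  rcases (A.erase c).eq_empty_or_nonempty with hAc | hAc
  · have hA_sub : ∀ a ∈ A, a = c := fun a ha => by
      by_contra hac
      simpa [hAc] using mem_erase.mpr ⟨hac, ha⟩
    refine ⟨fun _ => v, fun a ha b hb _ => ?_, fun a ha => ?_, fun a ha hac => ?_⟩
    · rw [hA_sub a ha, hA_sub b hb]
    · exact hA_sub a ha ▸ hv
    · exact absurd (hA_sub a ha) hac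
  -- a vertex of the lowest layer is nobody's parent, so it can be removed and re-added last
  obtain ⟨u, hu, hmin⟩ := (A.erase c).exists_min_image ℓ hAc
  obtain ⟨huc, huA⟩ := mem_erase.mp hu
  have hpu : p u ≠ u := fun h => by have := hp u huc; rw [h] at this; omega
  have hB : ∀ a ∈ A.erase u, a ≠ c → p a ∈ A.erase u := by
    intro a ha hac
    refine mem_erase.mpr ⟨fun h => ?_, hA a (mem_of_mem_erase ha) hac⟩
    have := hmin a (mem_erase.mpr ⟨hac, mem_of_mem_erase ha⟩)
    have := hp a hac
    rw [h] at this
    omega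
  obtain ⟨φ, hφ⟩ := ih (A.erase u) (erase_ssubset huA) (mem_erase.mpr ⟨huc.symm, hcA⟩) hB
  have hpuB : p u ∈ A.erase u := mem_erase.mpr ⟨hpu, hA u huA huc⟩
  have hdeg : #(A.erase u) < #{x ∈ S (ℓ u) | D x (φ (p u))} :=
    calc #(A.erase u) < #A := card_erase_lt_of_mem huA
      _ ≤ Fintype.card α := card_le_univ A
      _ ≤ _ := hS u huc _ (hp u huc ▸ hφ.mem_layer _ hpuB)
  simpa [insert_erase huA] using hφ.exists_insert hB (notMem_erase u A) hpuB hdeg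

end LayeredEmbedding

section Peeling

variable {V : Type*} [Fintype V] [DecidableEq V] {t : ℕ} (P : Fin t → Finset V)

-- `P i` is the paper's `V_{i+1}`, so this is `V \ (V₁ ∪ ⋯ ∪ V_n)`.
def remaining (n : ℕ) : Finset V :=
  univ \ (univ.filter fun j : Fin t => (j : ℕ) < n).biUnion P

theorem remaining_succ {i : ℕ} (hi : i < t) :
    remaining P (i + 1) = remaining P i \ P ⟨i, hi⟩ := by
  ext w
  simp only [remaining, mem_sdiff, mem_univ, mem_biUnion, mem_filter, true_and, not_exists,
    not_and]
  constructor
  · exact fun h => ⟨fun j hj => h j (by omega), h ⟨i, hi⟩ (by simp)⟩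
  · rintro ⟨h, hi'⟩ j hj
    rcases Nat.lt_succ_iff_lt_or_eq.mp hj with hj | hj
    · exact h j hj
    · exact (Fin.ext hj : j = ⟨i, hi⟩) ▸ hi'

theorem le_card_filter_of_mem_remaining_succ {D : V → V → Prop} [DecidableRel D] {k : ℕ}
    (hP : ∀ i : Fin t, P i = {v ∈ remaining P i | #{u ∈ remaining P i | D u v} < k})
    {i : ℕ} (hi : i < t) {w : V} (hw : w ∈ remaining P (i + 1)) :
    k ≤ #{u ∈ remaining P i | D u w} := by
  rw [remaining_succ P hi, mem_sdiff, hP, mem_filter] at hw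
  exact not_lt.mp fun h => hw.2 ⟨hw.1, h⟩

end Peeling

theorem peeling_terminates_general {α V : Type} [Fintype α] [Fintype V] [DecidableEq V]
    (T : SimpleGraph α) (hT : T.IsTree) (r : ℕ) (c : α)
    (hecc : ∀ u, T.dist u c ≤ r)
    (D : V → V → Prop) [DecidableRel D]
    (t : ℕ) (P : Fin t → Finset V)
    (hne : ∀ i, (P i).Nonempty)
    (hdef : ∀ i : Fin t,
      P i = ((Finset.univ : Finset V) \
          ((Finset.univ.filter (fun j => j < i)).biUnion P)).filter
        (fun v => (((Finset.univ : Finset V) \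
            ((Finset.univ.filter (fun j => j < i)).biUnion P)).filter
          (fun u => D u v)).card < Fintype.card α))
    (hnoT : ¬ ∃ φ : α → V, Function.Injective φ ∧
      ∀ u v : α, T.Adj u v → T.dist v c < T.dist u c → D (φ u) (φ v)) :
    t ≤ r := by
  classical
  have hP : ∀ i : Fin t,
      P i = {v ∈ remaining P i | #{u ∈ remaining P i | D u v} < Fintype.card α} := hdef
  by_contra! hrt
  obtain ⟨v, hv⟩ := hne ⟨r, hrt⟩
  rw [hP, mem_filter] at hv
  choose! par hpar using fun u (hu : u ≠ c) => hT.connected.exists_adj_dist_add_one_eq hu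
  obtain ⟨φ, hφ⟩ := exists_isLayeredEmbedding_univ (D := D) (S := remaining P) (c := c) (p := par)
    (ℓ := fun a => r - T.dist a c)
    (fun a ha => by have := (hpar a ha).2; have := hecc a; omega)
    (fun a ha w hw => le_card_filter_of_mem_remaining_succ P hP
      (by have := hT.connected.pos_dist_of_ne ha; omega) hw)
    (v := v) (by simpa using hv.1)
  refine hnoT ⟨φ, Set.injOn_univ.mp (by simpa using hφ.injOn), fun u w huw hwu => ?_⟩
  have huc : u ≠ c := by rintro rfl; simp at hwu
  rw [hT.eq_of_adj_of_dist_lt huw (hpar u huc).1 hwu (by have := (hpar u huc).2; omega)]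
  exact hφ.arc u (mem_univ u) huc

/-- Peeling a digraph by low in-degree terminates within `r` rounds if the digraph
contains no copy of a radius-`r` tree oriented towards its center. -/
theorem peeling_terminates {α V : Type} [Fintype α] [Fintype V] [DecidableEq V]
    (T : SimpleGraph α) (hT : T.IsTree) (r : ℕ) (c : α)
    (hecc : ∀ u, T.dist u c ≤ r) (hradius : ∀ v : α, ∃ u : α, r ≤ T.dist u v)
    (D : V → V → Prop) [DecidableRel D]
    (t : ℕ) (P : Fin t → Finset V)
    (hne : ∀ i, (P i).Nonempty)
    (hcover : Finset.univ.biUnion P = (Finset.univ : Finset V))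
    (hdef : ∀ i : Fin t,
      P i = ((Finset.univ : Finset V) \
          ((Finset.univ.filter (fun j => j < i)).biUnion P)).filter
        (fun v => (((Finset.univ : Finset V) \
            ((Finset.univ.filter (fun j => j < i)).biUnion P)).filter
          (fun u => D u v)).card < Fintype.card α))
    (hnoT : ¬ ∃ φ : α → V, Function.Injective φ ∧
      ∀ u v : α, T.Adj u v → T.dist v c < T.dist u c → D (φ u) (φ v)) :
    t ≤ r :=
  peeling_terminates_general T hT r c hecc D t P hne hdef hnoT
end

section
/- Let q ≥ 2, n ≥ 1, and let A₁, ..., A_r be a partition of [n]. Define F_A ⊆ Q(n,2) as the union of {x : Σ_i x_i = 2} (all q-edges with both nonzero entries equal to 1) and {x : x_u = 1, x_v = 2, a(u) < a(v)} where a(w) is the index of the part containing w. Then for q = 2, F_A does not contain a 3-copy of any path of length 2r (i.e., with 2r edges), and consequently F_A contains no 3-copy of any tree of radius r and diameter 2r. -/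
open Finset

/-- The construction `F_A` for a partition of `[n]` into parts indexed by `Fin r`
(for `q = 2`): all 2-edges with both nonzero entries `1`, together with those having a
`1` in a lower part and a `2` in a higher part. -/
def FA (n r : ℕ) (a : Fin n → Fin r) : Finset (Fin n → ℕ) :=
  (Qset 2 n).filter (fun x =>
    (∑ i, x i = 2) ∨ ∃ u v : Fin n, x u = 1 ∧ x v = 2 ∧ a u < a v)

lemma seq_bound : ∀ (r m : ℕ) (A : ℕ → ℕ),
    (∀ k, 0 < k → k < m → (A (k - 1) < A k ∨ A (k + 1) < A k)) →
    (∀ k, k ≤ m → A k < r) → m < 2 * r := by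
  intro r
  induction r with
  | zero =>
    intro m A _ hb
    exact absurd (hb 0 (Nat.zero_le _)) (by omega)
  | succ r ih =>
    intro m A hcond hb
    by_cases hm : m ≤ 1
    · have := hb 0 (by omega)
      omega
    push_neg at hm
    have key : ∀ k, 0 < k → k < m → 1 ≤ A k := by
      intro k hk hk'
      rcases hcond k hk hk' with h | h <;> omega
    have main := ih (m - 2) (fun j => A (j + 1) - 1) ?_ ?_
    · omega
    · intro k hk hk'
      have h := hcond (k + 1) (by omega) (by omega)
      have p1 := key k (by omega) (by omega)
      have p2 := key (k + 1) (by omega) (by omega)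
      have p3 := key (k + 1 + 1) (by omega) (by omega)
      simp only [Nat.add_sub_cancel] at h
      show A (k - 1 + 1) - 1 < A (k + 1) - 1 ∨ A (k + 1 + 1) - 1 < A (k + 1) - 1
      rw [show k - 1 + 1 = k from by omega]
      omega
    · intro k hk
      show A (k + 1) - 1 < r
      have h1 := hb (k + 1) (by omega)
      have h2 := key (k + 1) (by omega) (by omega)
      omega

lemma mem_qsupport {n : ℕ} {x : Fin n → ℕ} {i : Fin n} : i ∈ qsupport x ↔ x i ≠ 0 := by
  simp [qsupport]

lemma qset_le {n : ℕ} {x : Fin n → ℕ} (hx : x ∈ Qset 2 n) (i : Fin n) : x i ≤ 2 := by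
  rw [Qset, Finset.mem_filter] at hx
  obtain ⟨hx, -⟩ := hx
  rw [Finset.mem_image] at hx
  obtain ⟨f, -, hf⟩ := hx
  have hxi : x i = (f i : ℕ) := by rw [← hf]
  rw [hxi]
  exact Nat.lt_succ_iff.mp (f i).isLt

lemma sum_qsupport {n : ℕ} {x : Fin n → ℕ} {p q : Fin n} (hpq : p ≠ q)
    (hs : qsupport x = {p, q}) : ∑ i, x i = x p + x q := by
  have h1 : ∑ i ∈ qsupport x, x i = ∑ i, x i :=
    Finset.sum_subset (Finset.subset_univ _) (fun i _ hi => by simpa [qsupport] using hi)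
  rw [← h1, hs, Finset.sum_pair hpq]

lemma fa_two {n r : ℕ} {a : Fin n → Fin r} {x : Fin n → ℕ} {p q : Fin n}
    (hx : x ∈ FA n r a) (hpq : p ≠ q) (hs : qsupport x = {p, q}) (h2 : x q = 2) :
    a p < a q := by
  rw [FA, Finset.mem_filter] at hx
  obtain ⟨hQ, hcase⟩ := hx
  have hp0 : x p ≠ 0 := mem_qsupport.mp (by rw [hs]; simp)
  have hsum : ∑ i, x i = x p + x q := sum_qsupport hpq hs
  rcases hcase with h | ⟨u, w, hu, hw, huw⟩
  · rw [hsum] at h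
    omega
  · have hu' : u = p ∨ u = q := by
      have hm : u ∈ qsupport x := mem_qsupport.mpr (by omega)
      rw [hs] at hm
      simpa using hm
    have hw' : w = p ∨ w = q := by
      have hm : w ∈ qsupport x := mem_qsupport.mpr (by omega)
      rw [hs] at hm
      simpa using hm
    have hup : u = p := by
      rcases hu' with h | h
      · exact h
      · rw [h] at hu; omega
    have hwq : w = q := by
      rcases hw' with h | h
      · rw [h] at hw; rw [hup] at hu; omega
      · exact h
    rw [← hup, ← hwq]
    exact huw

lemma core_bound {n r : ℕ} (a : Fin n → Fin r) (m : ℕ) (v : ℕ → Fin n)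
    (hv : ∀ k l, k ≤ m → l ≤ m → v k = v l → k = l)
    (x : ℕ → (Fin n → ℕ))
    (hFA : ∀ k, k < m → x k ∈ FA n r a)
    (hsupp : ∀ k, k < m → qsupport (x k) = {v k, v (k + 1)})
    (h3 : ∀ k l, k < m → l < m → x k ≠ x l → ∀ i, x k i ≠ 0 → x l i ≠ 0 → 3 ≤ x k i + x l i) :
    m < 2 * r := by
  apply seq_bound r m (fun k => (a (v k)).val)
  · intro k hk0 hkm
    have hk1 : k - 1 < m := by omega
    have e1 := hsupp (k - 1) hk1
    have e2 := hsupp k hkm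
    rw [show k - 1 + 1 = k from by omega] at e1
    have hne01 : v (k - 1) ≠ v k := fun h => by
      have := hv (k - 1) k (by omega) (by omega) h; omega
    have hne12 : v (k + 1) ≠ v k := fun h => by
      have := hv (k + 1) k (by omega) (by omega) h; omega
    have n1 : x (k - 1) (v k) ≠ 0 := mem_qsupport.mp (by rw [e1]; simp)
    have n2 : x k (v k) ≠ 0 := mem_qsupport.mp (by rw [e2]; simp)
    have hxne : x (k - 1) ≠ x k := by
      intro h
      rw [h, e2] at e1
      have hm : v (k - 1) ∈ ({v k, v (k + 1)} : Finset (Fin n)) := by rw [e1]; simp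
      simp only [Finset.mem_insert, Finset.mem_singleton] at hm
      rcases hm with h' | h'
      · exact absurd (hv (k - 1) k (by omega) (by omega) h') (by omega)
      · exact absurd (hv (k - 1) (k + 1) (by omega) (by omega) h') (by omega)
    have hsum3 := h3 (k - 1) k hk1 hkm hxne (v k) n1 n2
    have b1 := qset_le (Finset.mem_filter.mp (hFA (k - 1) hk1)).1 (v k)
    have b2 := qset_le (Finset.mem_filter.mp (hFA k hkm)).1 (v k)
    have hor : x (k - 1) (v k) = 2 ∨ x k (v k) = 2 := by omega
    show (a (v (k - 1))).val < (a (v k)).val ∨ (a (v (k + 1))).val < (a (v k)).val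
    rcases hor with h | h
    · left
      exact Fin.lt_def.mp (fa_two (hFA (k - 1) hk1) hne01 e1 h)
    · right
      have e2' : qsupport (x k) = {v (k + 1), v k} := by rw [e2, Finset.pair_comm]
      exact Fin.lt_def.mp (fa_two (hFA k hkm) hne12 e2' h)
  · intro k _
    exact (a (v k)).isLt

lemma walk_getVert_inj {V : Type} {G : SimpleGraph V} {u v : V} (p : G.Walk u v) :
    p.IsPath → ∀ k l, k ≤ p.length → l ≤ p.length → p.getVert k = p.getVert l → k = l := by
  induction p with
  | nil =>
    intro _ k l hk hl _
    simp only [SimpleGraph.Walk.length_nil, Nat.le_zero] at hk hl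
    omega
  | cons h q ih =>
    intro hp k l hk hl he
    rw [SimpleGraph.Walk.cons_isPath_iff] at hp
    rw [SimpleGraph.Walk.length_cons] at hk hl
    rcases k with _ | k <;> rcases l with _ | l
    · rfl
    · exfalso
      rw [SimpleGraph.Walk.getVert_zero, SimpleGraph.Walk.getVert_cons_succ] at he
      exact hp.2 (SimpleGraph.Walk.mem_support_iff_exists_getVert.mpr ⟨l, he.symm, by omega⟩)
    · exfalso
      rw [SimpleGraph.Walk.getVert_zero, SimpleGraph.Walk.getVert_cons_succ] at he
      exact hp.2 (SimpleGraph.Walk.mem_support_iff_exists_getVert.mpr ⟨k, he, by omega⟩)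
    · rw [SimpleGraph.Walk.getVert_cons_succ, SimpleGraph.Walk.getVert_cons_succ] at he
      have := ih hp.1 k l (by omega) (by omega) he
      omega

/-- `F_A` contains no 3-copy of a path with `2r` edges, hence no 3-copy of any tree of
radius `r` and diameter `2r`. -/
theorem FA_no_long_path (n r : ℕ) (hn : 1 ≤ n) (a : Fin n → Fin r) :
    (¬ ContainsSCopy 3 (SimpleGraph.pathGraph (2 * r + 1)) (FA n r a)) ∧
    (∀ (β : Type) [Fintype β] (T : SimpleGraph β), T.IsTree →
      (∃ c : β, ∀ u, T.dist u c ≤ r) → (∃ u v : β, T.dist u v = 2 * r) →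
      ¬ ContainsSCopy 3 T (FA n r a)) := by
  have main : ∀ H : Finset (Fin n → ℕ), (∀ y ∈ H, y ∈ FA n r a) →
      ∀ v : ℕ → Fin n, (∀ k l, k ≤ 2 * r → l ≤ 2 * r → v k = v l → k = l) →
      (∀ k, k < 2 * r → ∃ y ∈ H, qsupport y = {v k, v (k + 1)}) →
      (∀ p ∈ H, ∀ q ∈ H, p ≠ q → ∀ i, p i ≠ 0 → q i ≠ 0 → 3 ≤ p i + q i) →
      False := by
    intro H hH v hv hex h3
    choose x hx1 hx2 using hex
    have hlt : 2 * r < 2 * r := by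
      refine core_bound a (2 * r) v hv
        (fun k => if h : k < 2 * r then x k h else 0)
        (fun k hk => by simp only [dif_pos hk]; exact hH _ (hx1 k hk))
        (fun k hk => by simp only [dif_pos hk]; exact hx2 k hk)
        (fun k l hk hl hne i hi1 hi2 => ?_)
      simp only [dif_pos hk, dif_pos hl] at hne hi1 hi2 ⊢
      exact h3 _ (hx1 k hk) _ (hx1 l hl) hne i hi1 hi2
    omega
  constructor
  · rintro ⟨H, hHsub, ι, hinj, hadj, -, h3⟩
    refine main H (fun y hy => hHsub hy) (fun k => ι ⟨min k (2 * r), by omega⟩) ?_ ?_ h3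
    · intro k l hk hl he
      have h2 : min k (2 * r) = min l (2 * r) := by
        have := hinj he
        simpa using this
      omega
    · intro k hk
      refine (hadj ⟨min k (2 * r), by omega⟩ ⟨min (k + 1) (2 * r), by omega⟩).mp ?_
      rw [SimpleGraph.pathGraph_adj]
      show min k (2 * r) + 1 = min (k + 1) (2 * r) ∨ min (k + 1) (2 * r) + 1 = min k (2 * r)
      omega
  · rintro β _ T hT - ⟨u, w, hd⟩ ⟨H, hHsub, ι, hinj, hadj, -, h3⟩
    obtain ⟨p, hp, hl⟩ := hT.isConnected.exists_path_of_dist u w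
    rw [hd] at hl
    refine main H (fun y hy => hHsub hy) (fun k => ι (p.getVert (min k (2 * r)))) ?_ ?_ h3
    · intro k l hk hl' he
      have h2 := walk_getVert_inj p hp (min k (2 * r)) (min l (2 * r))
        (by omega) (by omega) (hinj he)
      omega
    · intro k hk
      refine (hadj (p.getVert (min k (2 * r))) (p.getVert (min (k + 1) (2 * r)))).mp ?_
      rw [min_eq_left (by omega : k ≤ 2 * r), min_eq_left (by omega : k + 1 ≤ 2 * r)]
      exact p.adj_getVert_succ (by rw [hl]; exact hk)
end
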